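/- arXiv:2012.04521 — 5 statements merged into one kernel-verified Lean document; each statement's English description precedes it below -/
import Mathlib

section
/- Let φ be a spectrum, ν the Lebesgue–Stieltjes measure of φ on [0,1] (ν([0,t])=φ(t)), and μ the measure on [0,1] with density dμ/dν(α)=1−α. Then μ is a probability measure on [0,1] with μ({1})=0, and for every nonnegative real random variable X one has ρ_φ(X) = ∫_{[0,1)} ES_α(X) μ(dα), the equality holding in [0,∞]. -/
open MeasureTheory Set NNReal ENNReal

/-- Quantile function `F_X⁻¹(u) = inf {x | u ≤ F_X(x)}`. -/
noncomputable def quantile {Ω : Type*} [MeasurableSpace Ω] (P : Measure Ω)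
    (X : Ω → ℝ) (u : ℝ) : ℝ :=
  sInf {x : ℝ | u ≤ (P {ω | X ω ≤ x}).toReal}

/-- Spectral risk measure `ρ_φ(X) = ∫_0^1 F_X⁻¹(u) φ(u) du ∈ [0,∞]`. -/
noncomputable def specRisk {Ω : Type*} [MeasurableSpace Ω] (P : Measure Ω)
    (φ : ℝ → ℝ) (X : Ω → ℝ) : ℝ≥0∞ :=
  ∫⁻ u in Set.Ioo (0:ℝ) 1, ENNReal.ofReal (quantile P X u * φ u)

/-- Expected Shortfall at level `α`: `ES_α(X) = (1-α)⁻¹ ∫_α^1 F_X⁻¹(u) du ∈ [0,∞]`. -/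
noncomputable def expectedShortfall {Ω : Type*} [MeasurableSpace Ω] (P : Measure Ω)
    (α : ℝ) (X : Ω → ℝ) : ℝ≥0∞ :=
  ENNReal.ofReal ((1 - α)⁻¹) * ∫⁻ u in Set.Ioo α 1, ENNReal.ofReal (quantile P X u)

/-- `φ` is a spectrum: increasing, right-continuous, nonnegative on `[0,1]`
with `∫_0^1 φ(u) du = 1`. -/
def IsSpectrum (φ : ℝ → ℝ) : Prop :=
  MonotoneOn φ (Set.Icc 0 1) ∧ (∀ u ∈ Set.Icc (0:ℝ) 1, 0 ≤ φ u) ∧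
    (∀ t ∈ Set.Ico (0:ℝ) 1, ContinuousWithinAt φ (Set.Ici t) t) ∧
    (∫ u in Set.Ioo (0:ℝ) 1, φ u) = 1

section aux
open Filter
variable {Ω : Type*} [MeasurableSpace Ω] {P : Measure Ω} [IsProbabilityMeasure P]
  {X : Ω → ℝ}

lemma quantile_set_nonneg (hX : ∀ ω, 0 ≤ X ω) {u : ℝ} (hu : 0 < u) :
    ∀ x ∈ {x : ℝ | u ≤ (P {ω | X ω ≤ x}).toReal}, 0 ≤ x := by
  intro x hx
  by_contra h
  push_neg at h
  have hempty : {ω | X ω ≤ x} = ∅ := by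
    ext ω
    simp only [mem_setOf_eq, mem_empty_iff_false, iff_false, not_le]
    exact lt_of_lt_of_le h (hX ω)
  simp only [mem_setOf_eq] at hx
  rw [hempty] at hx
  simp at hx
  linarith

lemma quantile_nonneg (hX : ∀ ω, 0 ≤ X ω) {u : ℝ} (hu : 0 < u) : 0 ≤ quantile P X u :=
  Real.sInf_nonneg (quantile_set_nonneg hX hu)

lemma quantile_set_nonempty {u : ℝ} (hu : u < 1) :
    {x : ℝ | u ≤ (P {ω | X ω ≤ x}).toReal}.Nonempty := by
  have hmono : Monotone fun n : ℕ => {ω | X ω ≤ (n : ℝ)} := by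
    intro n m hnm ω hω
    exact le_trans hω ((Nat.cast_le (α := ℝ)).mpr hnm)
  have hU : ⋃ n : ℕ, {ω | X ω ≤ (n : ℝ)} = univ := by
    ext ω
    simp only [mem_iUnion, mem_setOf_eq, mem_univ, iff_true]
    exact ⟨⌈X ω⌉₊, Nat.le_ceil _⟩
  have ht : Tendsto (fun n : ℕ => P {ω | X ω ≤ (n : ℝ)}) atTop (nhds 1) := by
    have h := tendsto_measure_iUnion_atTop (μ := P) hmono
    rw [hU, measure_univ] at h
    exact h
  have hlt : ENNReal.ofReal u < 1 := by
    rcases le_or_gt u 0 with h0 | h0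
    · simp [ENNReal.ofReal_eq_zero.mpr h0]
    · rw [← ENNReal.ofReal_one]
      exact (ENNReal.ofReal_lt_ofReal_iff_of_nonneg h0.le).mpr hu
  obtain ⟨n, hn⟩ := (ht.eventually (eventually_gt_nhds hlt)).exists
  refine ⟨(n : ℝ), ?_⟩
  have : ENNReal.ofReal u ≤ P {ω | X ω ≤ (n : ℝ)} := hn.le
  exact (ENNReal.ofReal_le_iff_le_toReal (measure_ne_top _ _)).mp this

lemma quantile_monoOn (hX : ∀ ω, 0 ≤ X ω) : MonotoneOn (quantile P X) (Ioo (0:ℝ) 1) := by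
  intro u hu v hv huv
  apply csInf_le_csInf
  · exact ⟨0, fun x hx => quantile_set_nonneg hX hu.1 x hx⟩
  · exact quantile_set_nonempty hv.2
  · intro x hx
    exact le_trans huv hx

end aux

lemma ae_Ico_eq_Icc (ν : Measure ℝ) [IsFiniteMeasure ν] :
    ∀ᵐ u ∂(volume : Measure ℝ), ν (Ico 0 u) = ν (Icc 0 u) := by
  have hc : Set.Countable {x : ℝ | 0 < ν {x}} :=
    Measure.countable_meas_pos_of_disjoint_iUnion
      (fun x : ℝ => measurableSet_singleton x)
      (fun x y hxy => by simp [Function.onFun, hxy])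
  apply ae_iff.mpr
  apply measure_mono_null _ (hc.measure_zero volume)
  intro u hu
  simp only [mem_setOf_eq] at hu ⊢
  by_contra h
  push_neg at h
  have hν0 : ν {u} = 0 := nonpos_iff_eq_zero.mp h
  rcases le_or_gt 0 u with h0 | h0
  · have hle : ν (Icc 0 u) ≤ ν (Ico 0 u) := by
      rw [← Ico_union_right h0]
      exact (measure_union_le _ _).trans (by rw [hν0, add_zero])
    exact hu (le_antisymm (measure_mono Ico_subset_Icc_self) hle)
  · exact hu (by rw [Ico_eq_empty (not_lt.mpr h0.le), Icc_eq_empty (not_le.mpr h0)])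

lemma key_swap (ν : Measure ℝ) [IsFiniteMeasure ν] (Q : ℝ → ℝ≥0∞)
    (hQ : AEMeasurable Q (volume.restrict (Ioo (0:ℝ) 1))) (hQtop : ∀ u, Q u ≠ ∞)
    (s : Set ℝ) (hs : MeasurableSet s) :
    ∫⁻ α in s, ∫⁻ u in Ioo (0:ℝ) 1, Q u * (Ioi α).indicator 1 u ∂volume ∂ν
      = ∫⁻ u in Ioo (0:ℝ) 1, Q u * ν (Iio u ∩ s) ∂volume := by
  set m := volume.restrict (Ioo (0:ℝ) 1) with hm
  set ν' := ν.restrict s with hν'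
  obtain ⟨Q₀, hQ₀m, hQe⟩ := hQ
  have h1 : AEMeasurable (fun p : ℝ × ℝ => Q p.2) (ν'.prod m) := by
    have hN0 : m {u | ¬ Q u = Q₀ u} = 0 := ae_iff.mp hQe
    obtain ⟨N, hsub, hNm, hN0⟩ := exists_measurable_superset_of_null hN0
    refine ⟨fun p => Q₀ p.2, hQ₀m.comp measurable_snd, ae_iff.mpr ?_⟩
    refine measure_mono_null (t := (univ : Set ℝ) ×ˢ N) ?_ ?_
    · intro p hp
      exact ⟨mem_univ _, hsub hp⟩
    · rw [Measure.prod_prod, hN0, mul_zero]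
  have hind : Measurable (({q : ℝ × ℝ | q.1 < q.2}).indicator (1 : ℝ × ℝ → ℝ≥0∞)) :=
    measurable_one.indicator (measurableSet_lt measurable_fst measurable_snd)
  have hprod : AEMeasurable
      (Function.uncurry fun (α u : ℝ) => Q u * (Ioi α).indicator 1 u) (ν'.prod m) := by
    have heq : (Function.uncurry fun (α u : ℝ) => Q u * (Ioi α).indicator 1 u)
        = fun p : ℝ × ℝ => Q p.2 * ({q : ℝ × ℝ | q.1 < q.2}).indicator 1 p := by
      ext p
      simp [Function.uncurry, Set.indicator_apply, Set.mem_Ioi]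
    rw [heq]
    exact h1.mul hind.aemeasurable
  calc ∫⁻ α in s, ∫⁻ u in Ioo (0:ℝ) 1, Q u * (Ioi α).indicator 1 u ∂volume ∂ν
      = ∫⁻ u, ∫⁻ α, Q u * (Ioi α).indicator 1 u ∂ν' ∂m := lintegral_lintegral_swap hprod
    _ = ∫⁻ u in Ioo (0:ℝ) 1, Q u * ν (Iio u ∩ s) ∂volume := by
        apply lintegral_congr
        intro u
        calc ∫⁻ α, Q u * (Ioi α).indicator 1 u ∂ν'
            = ∫⁻ α, Q u * (Iio u).indicator 1 α ∂ν' := rfl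
          _ = Q u * ∫⁻ α, (Iio u).indicator 1 α ∂ν' := lintegral_const_mul' _ _ (hQtop u)
          _ = Q u * ν (Iio u ∩ s) := by
              rw [lintegral_indicator_one measurableSet_Iio, hν',
                Measure.restrict_apply measurableSet_Iio]

/-- If `ν` is the Lebesgue–Stieltjes measure of the spectrum `φ` on `[0,1]`
(`ν [0,t] = φ t`) and `μ` has density `α ↦ 1-α` with respect to `ν`, then `μ` is a
probability measure with `μ {1} = 0` and, for every nonnegative random variable `X`,
`ρ_φ(X) = ∫_{[0,1)} ES_α(X) μ(dα)` in `[0,∞]`. -/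
theorem spectral_ES_mixture {Ω : Type*} [MeasurableSpace Ω] (P : Measure Ω)
    [IsProbabilityMeasure P] (φ : ℝ → ℝ) (hφ : IsSpectrum φ)
    (ν : Measure ℝ) (hν : ∀ t ∈ Set.Icc (0:ℝ) 1, ν (Set.Icc 0 t) = ENNReal.ofReal (φ t))
    (hνsupp : ν (Set.Icc (0:ℝ) 1)ᶜ = 0)
    (μ : Measure ℝ) (hμ : μ = ν.withDensity (fun α => ENNReal.ofReal (1 - α)))
    (X : Ω → ℝ) (hXm : Measurable X) (hX : ∀ ω, 0 ≤ X ω) :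
    IsProbabilityMeasure μ ∧ μ {1} = 0 ∧
      specRisk P φ X = ∫⁻ α in Set.Ico (0:ℝ) 1, expectedShortfall P α X ∂μ := by
  obtain ⟨hmono, hnn, -, hint1⟩ := hφ
  have hν1 : ν (Icc (0:ℝ) 1) = ENNReal.ofReal (φ 1) := hν 1 ⟨zero_le_one, le_refl 1⟩
  haveI hfin : IsFiniteMeasure ν := by
    constructor
    have h := measure_union_le (μ := ν) (Icc (0:ℝ) 1) (Icc (0:ℝ) 1)ᶜ
    rw [union_compl_self, hνsupp, add_zero, hν1] at h
    exact lt_of_le_of_lt h ENNReal.ofReal_lt_top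
  set Q : ℝ → ℝ≥0∞ := fun u => ENNReal.ofReal (quantile P X u) with hQdef
  have hQae : AEMeasurable Q (volume.restrict (Ioo (0:ℝ) 1)) :=
    ENNReal.measurable_ofReal.comp_aemeasurable
      (aemeasurable_restrict_of_monotoneOn measurableSet_Ioo (quantile_monoOn hX))
  have hQtop : ∀ u, Q u ≠ ∞ := fun u => ENNReal.ofReal_ne_top
  have haeIco : ∀ᵐ u ∂(volume.restrict (Ioo (0:ℝ) 1)), ν (Ico 0 u) = ν (Icc 0 u) :=
    ae_restrict_of_ae (ae_Ico_eq_Icc ν)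
  have hphi_me : AEMeasurable φ (volume.restrict (Ioo (0:ℝ) 1)) :=
    aemeasurable_restrict_of_monotoneOn measurableSet_Ioo (hmono.mono Ioo_subset_Icc_self)
  haveI : IsFiniteMeasure (volume.restrict (Ioo (0:ℝ) 1)) := by
    constructor
    rw [Measure.restrict_apply_univ, Real.volume_Ioo]
    exact ENNReal.ofReal_lt_top
  have hphibd : ∀ᵐ u ∂(volume.restrict (Ioo (0:ℝ) 1)), ‖φ u‖ ≤ φ 1 := by
    filter_upwards [ae_restrict_mem measurableSet_Ioo] with u hu
    rw [Real.norm_eq_abs, abs_of_nonneg (hnn u (Ioo_subset_Icc_self hu))]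
    exact hmono (Ioo_subset_Icc_self hu) (right_mem_Icc.mpr zero_le_one) hu.2.le
  have hphiint : Integrable φ (volume.restrict (Ioo (0:ℝ) 1)) :=
    Integrable.mono' (integrable_const (φ 1)) hphi_me.aestronglyMeasurable hphibd
  have hphinn : 0 ≤ᵐ[volume.restrict (Ioo (0:ℝ) 1)] φ := by
    filter_upwards [ae_restrict_mem measurableSet_Ioo] with u hu
    exact hnn u (Ioo_subset_Icc_self hu)
  have hlint_phi : ∫⁻ u in Ioo (0:ℝ) 1, ENNReal.ofReal (φ u) ∂volume = 1 := by
    rw [← ofReal_integral_eq_lintegral_ofReal hphiint hphinn, hint1, ENNReal.ofReal_one]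
  have hIcoInt : ∫⁻ u in Ioo (0:ℝ) 1, ν (Ico 0 u) ∂volume = 1 := by
    have h1 : ∫⁻ u in Ioo (0:ℝ) 1, ν (Ico 0 u) ∂volume
        = ∫⁻ u in Ioo (0:ℝ) 1, ν (Icc 0 u) ∂volume := lintegral_congr_ae haeIco
    have h2 : ∫⁻ u in Ioo (0:ℝ) 1, ν (Icc 0 u) ∂volume
        = ∫⁻ u in Ioo (0:ℝ) 1, ENNReal.ofReal (φ u) ∂volume :=
      setLIntegral_congr_fun measurableSet_Ioo
        (fun u hu => hν u (Ioo_subset_Icc_self hu))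
    rw [h1, h2, hlint_phi]
  have hμuniv : μ univ = 1 := by
    rw [hμ, withDensity_apply _ MeasurableSet.univ, Measure.restrict_univ,
      ← lintegral_add_compl (fun α => ENNReal.ofReal (1 - α))
        (measurableSet_Icc (a := (0:ℝ)) (b := 1))]
    have hzero : ∫⁻ α in (Icc (0:ℝ) 1)ᶜ, ENNReal.ofReal (1 - α) ∂ν = 0 := by
      rw [Measure.restrict_eq_zero.mpr hνsupp, lintegral_zero_measure]
    have hstep : ∫⁻ α in Icc (0:ℝ) 1, ENNReal.ofReal (1 - α) ∂ν
        = ∫⁻ α in Icc (0:ℝ) 1,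
            ∫⁻ u in Ioo (0:ℝ) 1, (fun _ : ℝ => (1:ℝ≥0∞)) u * (Ioi α).indicator 1 u ∂volume ∂ν := by
      apply setLIntegral_congr_fun measurableSet_Icc
      intro α hα
      beta_reduce
      have hinner : ∫⁻ u in Ioo (0:ℝ) 1,
          (fun _ : ℝ => (1:ℝ≥0∞)) u * (Ioi α).indicator 1 u ∂volume
          = volume (Ioi α ∩ Ioo 0 1) := by
        simp only [one_mul]
        rw [lintegral_indicator_one measurableSet_Ioi,
          Measure.restrict_apply measurableSet_Ioi]
      have hset : Ioi α ∩ Ioo (0:ℝ) 1 = Ioo α 1 := by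
        ext v
        simp only [mem_inter_iff, mem_Ioi, mem_Ioo]
        exact ⟨fun ⟨h1, _, h3⟩ => ⟨h1, h3⟩,
          fun ⟨h1, h2⟩ => ⟨h1, lt_of_le_of_lt hα.1 h1, h2⟩⟩
      rw [hinner, hset, Real.volume_Ioo]
    rw [hzero, add_zero, hstep,
      key_swap ν (fun _ => (1:ℝ≥0∞)) aemeasurable_const (fun _ => one_ne_top) _ measurableSet_Icc]
    have hset2 : ∀ u ∈ Ioo (0:ℝ) 1, Iio u ∩ Icc (0:ℝ) 1 = Ico 0 u := by
      intro u hu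
      ext α
      simp only [mem_inter_iff, mem_Iio, mem_Icc, mem_Ico]
      exact ⟨fun ⟨h1, h2, _⟩ => ⟨h2, h1⟩,
        fun ⟨h1, h2⟩ => ⟨h2, h1, (h2.trans hu.2).le⟩⟩
    calc ∫⁻ u in Ioo (0:ℝ) 1, (fun _ : ℝ => (1:ℝ≥0∞)) u * ν (Iio u ∩ Icc 0 1) ∂volume
        = ∫⁻ u in Ioo (0:ℝ) 1, ν (Ico 0 u) ∂volume := by
          apply setLIntegral_congr_fun measurableSet_Ioo
          intro u hu
          beta_reduce
          rw [one_mul, hset2 u hu]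
      _ = 1 := hIcoInt
  have hμone : μ {1} = 0 := by
    rw [hμ, withDensity_apply _ (measurableSet_singleton 1), lintegral_singleton]
    simp
  have hmain : specRisk P φ X = ∫⁻ α in Ico (0:ℝ) 1, expectedShortfall P α X ∂μ := by
    have hd : Measurable fun α : ℝ => ENNReal.ofReal (1 - α) :=
      (measurable_const.sub measurable_id).ennreal_ofReal
    rw [hμ, setLIntegral_withDensity_eq_setLIntegral_mul_non_measurable ν hd _
      measurableSet_Ico (ae_of_all _ fun α => ENNReal.ofReal_lt_top)]
    have hES : ∀ α ∈ Ico (0:ℝ) 1,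
        ENNReal.ofReal (1 - α) * expectedShortfall P α X
          = ∫⁻ u in Ioo (0:ℝ) 1, Q u * (Ioi α).indicator 1 u ∂volume := by
      intro α hα
      have h1α : (0:ℝ) < 1 - α := by linarith [hα.2]
      simp only [expectedShortfall]
      rw [← mul_assoc, ← ENNReal.ofReal_mul h1α.le, mul_inv_cancel₀ h1α.ne',
        ENNReal.ofReal_one, one_mul]
      have hset : Ioi α ∩ Ioo (0:ℝ) 1 = Ioo α 1 := by
        ext v
        simp only [mem_inter_iff, mem_Ioi, mem_Ioo]
        exact ⟨fun ⟨h1, _, h3⟩ => ⟨h1, h3⟩,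
          fun ⟨h1, h2⟩ => ⟨h1, lt_of_le_of_lt hα.1 h1, h2⟩⟩
      calc ∫⁻ u in Ioo α 1, ENNReal.ofReal (quantile P X u) ∂volume
          = ∫⁻ u, (Ioi α).indicator Q u ∂(volume.restrict (Ioo (0:ℝ) 1)) := by
            rw [lintegral_indicator measurableSet_Ioi,
              Measure.restrict_restrict measurableSet_Ioi, hset]
        _ = ∫⁻ u in Ioo (0:ℝ) 1, Q u * (Ioi α).indicator 1 u ∂volume := by
            apply lintegral_congr
            intro u
            simp [Set.indicator_apply, mul_ite]
    simp only [Pi.mul_apply]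
    rw [setLIntegral_congr_fun measurableSet_Ico hES,
      key_swap ν Q hQae hQtop _ measurableSet_Ico]
    have hLHS : specRisk P φ X = ∫⁻ u in Ioo (0:ℝ) 1, Q u * ν (Icc 0 u) ∂volume := by
      simp only [specRisk]
      apply setLIntegral_congr_fun measurableSet_Ioo
      intro u hu
      beta_reduce
      rw [ENNReal.ofReal_mul (quantile_nonneg hX hu.1), hν u (Ioo_subset_Icc_self hu)]
    rw [hLHS]
    apply lintegral_congr_ae
    filter_upwards [haeIco, ae_restrict_mem measurableSet_Ioo] with u h hu
    have hset3 : Iio u ∩ Ico (0:ℝ) 1 = Ico 0 u := by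
      ext α
      simp only [mem_inter_iff, mem_Iio, mem_Ico]
      exact ⟨fun ⟨h1, h2, _⟩ => ⟨h2, h1⟩, fun ⟨h1, h2⟩ => ⟨h2, h1, h2.trans hu.2⟩⟩
    rw [hset3, h]
  exact ⟨⟨hμuniv⟩, hμone, hmain⟩
end

section
/- Let φ be a spectrum with L=φ(1) and let ρ̄≥0. Then g^*(φ(u)) ≥ −ρ̄ for every g∈𝒢 and u∈[0,1], and the functional 𝒢→(−∞,∞], g ↦ ∫_0^1 g^*(φ(u)) du, is lower semicontinuous with respect to the metric of compact convergence on 𝒢. -/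
open MeasureTheory Set NNReal ENNReal

/-- Convex conjugate `g^*(y) = sup_{s ∈ ℝ} (s y - g s)`, with values in `(-∞,∞]`. -/
noncomputable def conj (g : ℝ → ℝ) (y : ℝ) : EReal :=
  ⨆ s : ℝ, ((s * y - g s : ℝ) : EReal)

/-- The nonnegative part of an extended real number, as an element of `[0,∞]`. -/
noncomputable def erealToENNReal (x : EReal) : ℝ≥0∞ :=
  if x = ⊤ then ⊤ else ENNReal.ofReal x.toReal

/-- `∫_0^1 g^*(φ(u)) du ∈ (-∞,∞]` written via the shift `g^*(φ(u)) + b ≥ 0`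
(valid whenever `g^* ∘ φ ≥ -b` on `(0,1)`). -/
noncomputable def intConj (φ : ℝ → ℝ) (g : ℝ → ℝ) (b : ℝ) : EReal :=
  ((∫⁻ u in Set.Ioo (0:ℝ) 1, erealToENNReal (conj g (φ u) + (b : EReal)) : ℝ≥0∞) : EReal)
    - (b : EReal)

/-- The set `𝒢` of increasing, convex, `L`-Lipschitz functions `g : ℝ → ℝ` with
`0 ≤ g(x) ≤ L·x⁺ + ρ̄`, inside `C(ℝ,ℝ)` with the topology of compact convergence. -/
def GSet (L ρbar : ℝ) : Set C(ℝ, ℝ) :=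
  {g | Monotone (g : ℝ → ℝ) ∧ ConvexOn ℝ Set.univ (g : ℝ → ℝ) ∧
    (∀ x y : ℝ, |g x - g y| ≤ L * |x - y|) ∧
    (∀ x : ℝ, 0 ≤ g x ∧ g x ≤ L * max x 0 + ρbar)}

lemma erealToENNReal_coe (r : ℝ) : erealToENNReal (r : EReal) = ENNReal.ofReal r := by
  simp [erealToENNReal]

lemma erealToENNReal_top : erealToENNReal ⊤ = ⊤ := by simp [erealToENNReal]

/-- Step A1: pushing `erealToENNReal` through a sup of reals plus a constant. -/
lemma erealToENNReal_iSup_add {ι : Type*} [Nonempty ι] (f : ι → ℝ) (b : ℝ) :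
    erealToENNReal ((⨆ i, ((f i : ℝ) : EReal)) + (b : EReal))
      = ⨆ i, ENNReal.ofReal (f i + b) := by
  obtain ⟨i₀⟩ := ‹Nonempty ι›
  have hbot : (⨆ i, ((f i : ℝ) : EReal)) ≠ ⊥ := fun h => by
    have := le_iSup (fun i => ((f i : ℝ) : EReal)) i₀
    rw [h, le_bot_iff] at this
    exact EReal.coe_ne_bot _ this
  rcases eq_or_ne (⨆ i, ((f i : ℝ) : EReal)) ⊤ with htop | htop
  · rw [htop, EReal.top_add_coe, erealToENNReal_top]
    symm
    rw [eq_top_iff, ← ENNReal.iSup_natCast]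
    refine iSup_le fun n => ?_
    have hlt : ((n - b : ℝ) : EReal) < ⨆ i, ((f i : ℝ) : EReal) := htop ▸ EReal.coe_lt_top _
    rw [lt_iSup_iff] at hlt
    obtain ⟨i, hi⟩ := hlt
    have : (n : ℝ) - b < f i := by exact_mod_cast hi
    calc (n : ℝ≥0∞) = ENNReal.ofReal (n : ℝ) := by simp
      _ ≤ ENNReal.ofReal (f i + b) := ENNReal.ofReal_le_ofReal (by linarith)
      _ ≤ _ := le_iSup (fun i => ENNReal.ofReal (f i + b)) i
  · obtain ⟨a, hA⟩ : ∃ a : ℝ, (⨆ i, ((f i : ℝ) : EReal)) = (a : EReal) :=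
      ⟨_, (EReal.coe_toReal htop hbot).symm⟩
    have hle : ∀ i, f i ≤ a := fun i => by
      have h := le_iSup (fun i => ((f i : ℝ) : EReal)) i
      rw [hA] at h
      exact_mod_cast h
    rw [hA, ← EReal.coe_add, erealToENNReal_coe]
    apply le_antisymm
    · refine ENNReal.le_of_forall_pos_le_add fun ε hε _ => ?_
      have hlt : ((a - ε : ℝ) : EReal) < ⨆ i, ((f i : ℝ) : EReal) := by
        rw [hA]
        exact_mod_cast sub_lt_self a (by exact_mod_cast hε)
      rw [lt_iSup_iff] at hlt
      obtain ⟨i, hi⟩ := hlt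
      have hi' : a - ε < f i := by exact_mod_cast hi
      calc ENNReal.ofReal (a + b) ≤ ENNReal.ofReal ((f i + b) + ε) :=
            ENNReal.ofReal_le_ofReal (by push_cast; linarith)
        _ ≤ ENNReal.ofReal (f i + b) + ENNReal.ofReal ε := ENNReal.ofReal_add_le
        _ ≤ (⨆ i, ENNReal.ofReal (f i + b)) + ε := by
            gcongr
            · exact le_iSup (fun i => ENNReal.ofReal (f i + b)) i
            · simp
    · exact iSup_le fun i => ENNReal.ofReal_le_ofReal (by linarith [hle i])

/-- Step A2: a sup over `ℝ` of `ofReal` of a continuous function equals the sup over `ℚ`. -/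
lemma iSup_ofReal_rat_eq {ψ : ℝ → ℝ} (hψ : Continuous ψ) :
    (⨆ s : ℝ, ENNReal.ofReal (ψ s)) = ⨆ q : ℚ, ENNReal.ofReal (ψ q) := by
  apply le_antisymm
  · refine iSup_le fun s => ENNReal.le_of_forall_pos_le_add fun ε hε _ => ?_
    have hεpos : (0:ℝ) < ε := hε
    obtain ⟨δ, hδ, hδ'⟩ := Metric.continuousAt_iff.1 hψ.continuousAt ε hεpos
    obtain ⟨q, hq1, hq2⟩ := exists_rat_btwn (show s - δ < s by linarith)
    have hdist : dist (q : ℝ) s < δ := by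
      rw [Real.dist_eq, abs_sub_lt_iff]; constructor <;> linarith
    have := hδ' hdist
    rw [Real.dist_eq, abs_sub_lt_iff] at this
    calc ENNReal.ofReal (ψ s) ≤ ENNReal.ofReal (ψ q + ε) :=
          ENNReal.ofReal_le_ofReal (by linarith [this.2])
      _ ≤ ENNReal.ofReal (ψ q) + ENNReal.ofReal ε := ENNReal.ofReal_add_le
      _ ≤ (⨆ q : ℚ, ENNReal.ofReal (ψ q)) + ε := by
          gcongr
          · exact le_iSup (fun q : ℚ => ENNReal.ofReal (ψ q)) q
          · simp
  · exact iSup_le fun q => le_iSup (fun s : ℝ => ENNReal.ofReal (ψ s)) (q : ℝ)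

/-- The key pointwise identity. -/
lemma erealToENNReal_conj_add (g : C(ℝ, ℝ)) (y b : ℝ) :
    erealToENNReal (conj g y + (b : EReal))
      = ⨆ q : ℚ, ENNReal.ofReal ((q : ℝ) * y - g q + b) := by
  rw [conj, erealToENNReal_iSup_add (fun s : ℝ => s * y - g s) b]
  exact iSup_ofReal_rat_eq (by fun_prop)

/-- The truncated functional. -/
noncomputable def PhiT (φ : ℝ → ℝ) (b : ℝ) (T : Finset ℚ) (g : C(ℝ, ℝ)) : ℝ≥0∞ :=
  ∫⁻ u in Set.Ioo (0:ℝ) 1, ⨆ q ∈ T, ENNReal.ofReal ((q : ℝ) * φ u - g q + b)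

lemma aemeasurable_biSup_T (φ : ℝ → ℝ) (hφm : MonotoneOn φ (Set.Icc 0 1))
    (b : ℝ) (T : Finset ℚ) (g : C(ℝ, ℝ)) :
    AEMeasurable (fun u => ⨆ q ∈ T, ENNReal.ofReal ((q : ℝ) * φ u - g q + b))
      (volume.restrict (Set.Ioo (0:ℝ) 1)) := by
  have hφ : AEMeasurable φ (volume.restrict (Set.Ioo (0:ℝ) 1)) :=
    aemeasurable_restrict_of_monotoneOn measurableSet_Ioo
      (hφm.mono Set.Ioo_subset_Icc_self)
  classical
  induction T using Finset.induction with
  | empty => simpa using aemeasurable_const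
  | @insert a T ha ih =>
    have : (fun u => ⨆ q ∈ insert a T, ENNReal.ofReal ((q : ℝ) * φ u - g q + b))
        = fun u => max (ENNReal.ofReal ((a : ℝ) * φ u - g a + b))
            (⨆ q ∈ T, ENNReal.ofReal ((q : ℝ) * φ u - g q + b)) := by
      funext u; rw [Finset.iSup_insert]
    rw [this]
    exact AEMeasurable.max
      (ENNReal.measurable_ofReal.comp_aemeasurable (((hφ.const_mul _).sub aemeasurable_const).add
        aemeasurable_const)) ih

lemma PhiT_lt_top (φ : ℝ → ℝ) (hφm : MonotoneOn φ (Set.Icc 0 1))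
    (hφ0 : ∀ u ∈ Set.Icc (0:ℝ) 1, 0 ≤ φ u)
    (b : ℝ) (T : Finset ℚ) (g : C(ℝ, ℝ)) : PhiT φ b T g < ⊤ := by
  classical
  set M : ℝ := ∑ q ∈ T, (|(q : ℝ)| * φ 1 + |g q| + |b|) with hM
  have hφ1 : 0 ≤ φ 1 := hφ0 1 (by norm_num)
  have hterm : ∀ q : ℚ, 0 ≤ |(q : ℝ)| * φ 1 + |g q| + |b| := fun q => by positivity
  have hbound : ∀ u ∈ Set.Ioo (0:ℝ) 1,
      (⨆ q ∈ T, ENNReal.ofReal ((q : ℝ) * φ u - g q + b)) ≤ ENNReal.ofReal M := by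
    intro u hu
    have hu' : u ∈ Set.Icc (0:ℝ) 1 := Set.Ioo_subset_Icc_self hu
    refine iSup₂_le fun q hq => ENNReal.ofReal_le_ofReal ?_
    have h1 : (q : ℝ) * φ u ≤ |(q : ℝ)| * φ 1 := by
      calc (q : ℝ) * φ u ≤ |(q : ℝ)| * φ u :=
            mul_le_mul_of_nonneg_right (le_abs_self _) (hφ0 u hu')
        _ ≤ |(q : ℝ)| * φ 1 :=
            mul_le_mul_of_nonneg_left (hφm hu' (by norm_num) hu'.2) (abs_nonneg _)
    have h2 : (q : ℝ) * φ u - g q + b ≤ |(q : ℝ)| * φ 1 + |g q| + |b| := by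
      have := neg_abs_le (g q); have := le_abs_self b; linarith
    calc (q : ℝ) * φ u - g q + b ≤ |(q : ℝ)| * φ 1 + |g q| + |b| := h2
      _ ≤ M := Finset.single_le_sum (fun q _ => hterm q) hq
  calc PhiT φ b T g ≤ ∫⁻ _ in Set.Ioo (0:ℝ) 1, ENNReal.ofReal M := by
        refine lintegral_mono_ae ?_
        filter_upwards [ae_restrict_mem measurableSet_Ioo] with u hu using hbound u hu
    _ = ENNReal.ofReal M := by
        rw [lintegral_const, Measure.restrict_apply_univ, Real.volume_Ioo]
        simp
    _ < ⊤ := ENNReal.ofReal_lt_top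

lemma PhiT_le_add (φ : ℝ → ℝ) (b : ℝ) (T : Finset ℚ) (g₀ g : C(ℝ, ℝ)) {δ : ℝ}
    (hδ : 0 ≤ δ) (h : ∀ q ∈ T, |g q - g₀ q| ≤ δ) :
    PhiT φ b T g₀ ≤ PhiT φ b T g + ENNReal.ofReal δ := by
  have hpt : ∀ u, (⨆ q ∈ T, ENNReal.ofReal ((q : ℝ) * φ u - g₀ q + b))
      ≤ (⨆ q ∈ T, ENNReal.ofReal ((q : ℝ) * φ u - g q + b)) + ENNReal.ofReal δ := by
    intro u
    refine iSup₂_le fun q hq => ?_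
    have habs := abs_le.1 (h q hq)
    calc ENNReal.ofReal ((q : ℝ) * φ u - g₀ q + b)
        ≤ ENNReal.ofReal (((q : ℝ) * φ u - g q + b) + δ) :=
          ENNReal.ofReal_le_ofReal (by linarith [habs.1])
      _ ≤ ENNReal.ofReal ((q : ℝ) * φ u - g q + b) + ENNReal.ofReal δ := ENNReal.ofReal_add_le
      _ ≤ (⨆ q ∈ T, ENNReal.ofReal ((q : ℝ) * φ u - g q + b)) + ENNReal.ofReal δ := by
          gcongr
          exact le_iSup₂ (f := fun (q : ℚ) (_ : q ∈ T) =>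
            ENNReal.ofReal ((q : ℝ) * φ u - g q + b)) q hq
  calc PhiT φ b T g₀ ≤ ∫⁻ u in Set.Ioo (0:ℝ) 1,
        ((⨆ q ∈ T, ENNReal.ofReal ((q : ℝ) * φ u - g q + b)) + ENNReal.ofReal δ) :=
        lintegral_mono hpt
    _ = PhiT φ b T g + ENNReal.ofReal δ * (volume.restrict (Set.Ioo (0:ℝ) 1)) Set.univ := by
        rw [PhiT, lintegral_add_right _ measurable_const, lintegral_const]
    _ = PhiT φ b T g + ENNReal.ofReal δ := by
        rw [Measure.restrict_apply_univ, Real.volume_Ioo]; simp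

lemma lowerSemicontinuous_PhiT (φ : ℝ → ℝ) (hφm : MonotoneOn φ (Set.Icc 0 1))
    (hφ0 : ∀ u ∈ Set.Icc (0:ℝ) 1, 0 ≤ φ u) (b : ℝ) (T : Finset ℚ) :
    LowerSemicontinuous (PhiT φ b T) := by
  intro g₀ c hc
  obtain ⟨r, hr0, hr⟩ := ENNReal.lt_iff_exists_add_pos_lt.1 hc
  have hrR : (0:ℝ) < (r:ℝ) := hr0
  have hev : ∀ᶠ g : C(ℝ, ℝ) in nhds g₀, ∀ q ∈ T, |g q - g₀ q| ≤ (r : ℝ) := by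
    rw [Filter.eventually_all_finset]
    intro q _
    have hcont : Continuous fun g : C(ℝ, ℝ) => g (q : ℝ) :=
      continuous_eval_const (q : ℝ)
    filter_upwards [(hcont.tendsto g₀) (Metric.closedBall_mem_nhds (g₀ (q:ℝ)) hrR)] with g hg
    simpa [Real.dist_eq] using hg
  filter_upwards [hev] with g hg
  have hkey : PhiT φ b T g₀ ≤ PhiT φ b T g + ENNReal.ofReal r :=
    PhiT_le_add φ b T g₀ g hrR.le hg
  have h1 : c + (r : ℝ≥0∞) < PhiT φ b T g + (r : ℝ≥0∞) := by
    have : ENNReal.ofReal (r : ℝ) = (r : ℝ≥0∞) := ENNReal.ofReal_coe_nnreal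
    exact lt_of_lt_of_le hr (this ▸ hkey)
  exact lt_of_add_lt_add_right h1

/-- The representation of the shifted integral functional as a sup of the truncations. -/
lemma lintegral_rep (φ : ℝ → ℝ) (hφm : MonotoneOn φ (Set.Icc 0 1)) (b : ℝ) (g : C(ℝ, ℝ)) :
    (∫⁻ u in Set.Ioo (0:ℝ) 1, erealToENNReal (conj g (φ u) + (b : EReal)))
      = ⨆ T : Finset ℚ, PhiT φ b T g := by
  have h1 : (fun u => erealToENNReal (conj g (φ u) + (b : EReal)))
      = fun u => ⨆ T : Finset ℚ, ⨆ q ∈ T, ENNReal.ofReal ((q : ℝ) * φ u - g q + b) := by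
    funext u
    rw [erealToENNReal_conj_add g (φ u) b,
      iSup_eq_iSup_finset (fun q : ℚ => ENNReal.ofReal ((q : ℝ) * φ u - g q + b))]
  rw [h1]
  exact lintegral_iSup_directed
    (fun T => aemeasurable_biSup_T φ hφm b T g)
    (fun T₁ T₂ => ⟨T₁ ∪ T₂,
      fun u => biSup_mono (fun q hq => Finset.mem_union_left _ hq),
      fun u => biSup_mono (fun q hq => Finset.mem_union_right _ hq)⟩)

/-- LSC of `EReal` coercion minus a real constant. -/
lemma lsc_coe_sub {α : Type*} [TopologicalSpace α] {f : α → ℝ≥0∞}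
    (hf : LowerSemicontinuous f) (b : ℝ) :
    LowerSemicontinuous fun x => ((f x : EReal) - (b : EReal)) := by
  intro x y hy
  have hy' : y + (b : EReal) < (f x : EReal) :=
    (EReal.lt_sub_iff_add_lt (Or.inl (EReal.coe_ne_bot b)) (Or.inl (EReal.coe_ne_top b))).1 hy
  rcases lt_or_ge (y + (b : EReal)) 0 with hneg | hpos
  · filter_upwards with x'
    rw [gt_iff_lt, EReal.lt_sub_iff_add_lt (Or.inl (EReal.coe_ne_bot b)) (Or.inl (EReal.coe_ne_top b))]
    exact lt_of_lt_of_le hneg (EReal.coe_ennreal_nonneg _)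
  · have hne_top : y + (b : EReal) ≠ ⊤ := hy'.ne_top
    have hne_bot : y + (b : EReal) ≠ ⊥ := fun h => by
      rw [h] at hpos; exact absurd hpos (by simp)
    obtain ⟨r, hr⟩ : ∃ r : ℝ, y + (b : EReal) = (r : EReal) :=
      ⟨_, (EReal.coe_toReal hne_top hne_bot).symm⟩
    have hr0 : (0:ℝ) ≤ r := by rw [hr] at hpos; exact_mod_cast hpos
    have hcr : ((ENNReal.ofReal r : ℝ≥0∞) : EReal) = (r : EReal) := by
      rw [EReal.coe_ennreal_ofReal, max_eq_left hr0]
    have hclt : ENNReal.ofReal r < f x := by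
      rw [← EReal.coe_ennreal_lt_coe_ennreal_iff, hcr, ← hr]
      exact hy'
    filter_upwards [hf x _ hclt] with x' hx'
    rw [gt_iff_lt, EReal.lt_sub_iff_add_lt (Or.inl (EReal.coe_ne_bot b)) (Or.inl (EReal.coe_ne_top b)),
      hr, ← hcr]
    exact EReal.coe_ennreal_lt_coe_ennreal_iff.2 hx'

/-- Let `φ` be a spectrum with `L = φ(1)` and `ρ̄ ≥ 0`. Then
`g^*(φ(u)) ≥ -ρ̄` for every `g ∈ 𝒢` and `u ∈ [0,1]`, and the functional
`g ↦ ∫_0^1 g^*(φ(u)) du` is lower semicontinuous on `𝒢` with respect to the topology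
of compact convergence. -/
theorem intConj_lowerSemicontinuous (φ : ℝ → ℝ) (hφ : IsSpectrum φ)
    (ρbar : ℝ) (hρ : 0 ≤ ρbar) :
    (∀ g ∈ GSet (φ 1) ρbar, ∀ u ∈ Set.Icc (0:ℝ) 1,
        ((-ρbar : ℝ) : EReal) ≤ conj (g : ℝ → ℝ) (φ u)) ∧
      LowerSemicontinuous
        (fun g : GSet (φ 1) ρbar => intConj φ ((g : C(ℝ, ℝ)) : ℝ → ℝ) ρbar) := by
  obtain ⟨hφm, hφ0, -, -⟩ := hφ
  constructor
  · intro g hg u _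
    have h0 : (g : ℝ → ℝ) 0 ≤ ρbar := by
      have := (hg.2.2.2 0).2
      simpa using this
    calc ((-ρbar : ℝ) : EReal) ≤ ((0 * φ u - (g : ℝ → ℝ) 0 : ℝ) : EReal) := by
          exact_mod_cast (by linarith : -ρbar ≤ 0 * φ u - (g : ℝ → ℝ) 0)
      _ ≤ conj (g : ℝ → ℝ) (φ u) := le_iSup (fun s : ℝ => ((s * φ u - g s : ℝ) : EReal)) 0
  · have hΦ : LowerSemicontinuous
        (fun g : C(ℝ, ℝ) => ⨆ T : Finset ℚ, PhiT φ ρbar T g) :=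
      lowerSemicontinuous_iSup fun T => lowerSemicontinuous_PhiT φ hφm hφ0 ρbar T
    have hΦ' : LowerSemicontinuous
        (fun g : GSet (φ 1) ρbar => ⨆ T : Finset ℚ, PhiT φ ρbar T (g : C(ℝ, ℝ))) := by
      intro x y hy
      exact (continuous_subtype_val.tendsto x).eventually (hΦ (x : C(ℝ, ℝ)) y hy)
    have := lsc_coe_sub hΦ' ρbar
    have heq : (fun g : GSet (φ 1) ρbar => intConj φ ((g : C(ℝ, ℝ)) : ℝ → ℝ) ρbar)
        = fun g : GSet (φ 1) ρbar =>
          (((⨆ T : Finset ℚ, PhiT φ ρbar T (g : C(ℝ, ℝ)) : ℝ≥0∞) : EReal) - (ρbar : EReal)) := by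
      funext g
      rw [intConj, lintegral_rep φ hφm ρbar (g : C(ℝ, ℝ))]
    rw [heq]
    exact this
end

section
/- Let φ be a spectrum with L=φ(1), let ρ̄≥0, ĉ>0, m≥2, s_k=(k−1)ĉ/(m−1), and let 𝒞 be a nonempty family of random variables on a probability space, each taking values in [0,ĉ] almost surely. For a continuous h:ℝ→ℝ write h̃^*(y)=max_{s∈[0,ĉ]}(sy−h(s)), and for g∈Ĝ set K(g) = inf_{C∈𝒞} E[g(C)] + ∫_0^1 g̃^*(φ(u)) du and K_m(g) = inf_{C∈𝒞} E[p_m(g)(C)] + ∫_0^1 (p_m(g))̃^*(φ(u)) du, where p_m(g) is the piecewise linear interpolation of g at the nodes s_1,…,s_m. Then |inf_{g∈Ĝ} K_m(g) − inf_{g∈Ĝ} K(g)| ≤ sup_{g∈Ĝ} |K_m(g) − K(g)| ≤ 2L·ĉ/(m−1). -/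
open MeasureTheory Set NNReal ENNReal

/-- The set `𝒢` of increasing, convex, `L`-Lipschitz functions `g : ℝ → ℝ` with
`0 ≤ g(x) ≤ L·x⁺ + ρ̄`. -/
def GFun (L ρbar : ℝ) : Set (ℝ → ℝ) :=
  {g | Monotone g ∧ ConvexOn ℝ Set.univ g ∧
    (∀ x y : ℝ, |g x - g y| ≤ L * |x - y|) ∧
    (∀ x : ℝ, 0 ≤ g x ∧ g x ≤ L * max x 0 + ρbar)}

/-- The set `Ĝ` of `g ∈ 𝒢` which are constant on `(-∞,0]` and affine with slope `L`
on `[ĉ,∞)`. -/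
def GHat (L ρbar chat : ℝ) : Set (ℝ → ℝ) :=
  {g | g ∈ GFun L ρbar ∧ (∀ s < (0:ℝ), g s = g 0) ∧
    (∀ s > chat, g s = g chat + L * (s - chat))}

/-- The truncated conjugate `h̃^*(y) = max_{s ∈ [0,ĉ]} (s y - h s)`. -/
noncomputable def cstar (chat : ℝ) (h : ℝ → ℝ) (y : ℝ) : ℝ :=
  sSup ((fun s => s * y - h s) '' Set.Icc 0 chat)

/-- The objective `K(g) = inf_{C ∈ 𝒞} E[g(C)] + ∫_0^1 g̃^*(φ(u)) du`. -/
noncomputable def Kobj {Ω : Type*} [MeasurableSpace Ω] (P : Measure Ω)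
    (𝒞 : Set (Ω → ℝ)) (φ : ℝ → ℝ) (chat : ℝ) (g : ℝ → ℝ) : ℝ :=
  sInf ((fun C => ∫ ω, g (C ω) ∂P) '' 𝒞) + ∫ u in Set.Ioo (0:ℝ) 1, cstar chat g (φ u)

lemma my_csInf_abs_sub {α : Type*} {S : Set α} (hS : S.Nonempty) (F G : α → ℝ) (ε : ℝ)
    (hF : BddBelow (F '' S)) (hG : BddBelow (G '' S))
    (h : ∀ x ∈ S, |F x - G x| ≤ ε) :
    |sInf (F '' S) - sInf (G '' S)| ≤ ε := by
  rw [abs_sub_le_iff]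
  constructor
  · have h3 : sInf (F '' S) - ε ≤ sInf (G '' S) := by
      apply le_csInf (hS.image G)
      rintro b ⟨x, hx, rfl⟩
      have h1 : sInf (F '' S) ≤ F x := csInf_le hF ⟨x, hx, rfl⟩
      have h2 := h x hx
      rw [abs_le] at h2
      linarith [h2.1, h2.2]
    linarith
  · have h3 : sInf (G '' S) - ε ≤ sInf (F '' S) := by
      apply le_csInf (hS.image F)
      rintro b ⟨x, hx, rfl⟩
      have h1 : sInf (G '' S) ≤ G x := csInf_le hG ⟨x, hx, rfl⟩
      have h2 := h x hx
      rw [abs_le] at h2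
      linarith [h2.1, h2.2]
    linarith

lemma cstar_bddAbove (chat : ℝ) (h : ℝ → ℝ) (y b : ℝ)
    (hb : ∀ s ∈ Set.Icc (0:ℝ) chat, b ≤ h s) :
    BddAbove ((fun s => s * y - h s) '' Set.Icc 0 chat) := by
  refine ⟨chat * |y| - b, ?_⟩
  rintro z ⟨s, hs, rfl⟩
  have h1 : s * y ≤ chat * |y| := by
    calc s * y ≤ |s * y| := le_abs_self _
      _ = s * |y| := by rw [abs_mul, abs_of_nonneg hs.1]
      _ ≤ chat * |y| := mul_le_mul_of_nonneg_right hs.2 (abs_nonneg y)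
  have h2 := hb s hs
  show s * y - h s ≤ chat * |y| - b
  linarith

lemma cstar_le (chat : ℝ) (hc : 0 ≤ chat) (h : ℝ → ℝ) (y M : ℝ)
    (hM : ∀ s ∈ Set.Icc (0:ℝ) chat, s * y - h s ≤ M) : cstar chat h y ≤ M := by
  apply csSup_le (((Set.nonempty_Icc).2 hc).image _)
  rintro z ⟨s, hs, rfl⟩; exact hM s hs

lemma le_cstar (chat : ℝ) (h : ℝ → ℝ) {y b : ℝ} {s : ℝ} (hs : s ∈ Set.Icc (0:ℝ) chat)
    (hb : ∀ t ∈ Set.Icc (0:ℝ) chat, b ≤ h t) : s * y - h s ≤ cstar chat h y :=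
  le_csSup (cstar_bddAbove chat h y b hb) ⟨s, hs, rfl⟩

lemma cstar_abs_sub (chat : ℝ) (hc : 0 ≤ chat) (h1 h2 : ℝ → ℝ) (y ε b1 b2 : ℝ)
    (hb1 : ∀ s ∈ Set.Icc (0:ℝ) chat, b1 ≤ h1 s)
    (hb2 : ∀ s ∈ Set.Icc (0:ℝ) chat, b2 ≤ h2 s)
    (hd : ∀ s ∈ Set.Icc (0:ℝ) chat, |h1 s - h2 s| ≤ ε) :
    |cstar chat h1 y - cstar chat h2 y| ≤ ε := by
  rw [abs_sub_le_iff]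
  constructor
  · rw [sub_le_iff_le_add]
    apply cstar_le chat hc h1 y _
    intro s hs
    have := le_cstar chat h2 (y := y) hs hb2
    have hds := hd s hs
    rw [abs_le] at hds
    linarith [hds.1, hds.2]
  · rw [sub_le_iff_le_add]
    apply cstar_le chat hc h2 y _
    intro s hs
    have := le_cstar chat h1 (y := y) hs hb1
    have hds := hd s hs
    rw [abs_le] at hds
    linarith [hds.1, hds.2]

lemma cstar_lip (chat : ℝ) (hc : 0 ≤ chat) (h : ℝ → ℝ) (b : ℝ)
    (hb : ∀ s ∈ Set.Icc (0:ℝ) chat, b ≤ h s) (y1 y2 : ℝ) :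
    |cstar chat h y1 - cstar chat h y2| ≤ chat * |y1 - y2| := by
  have key : ∀ z1 z2 : ℝ, cstar chat h z1 - cstar chat h z2 ≤ chat * |z1 - z2| := by
    intro z1 z2
    rw [sub_le_iff_le_add]
    apply cstar_le chat hc h z1 _
    intro s hs
    have h1 := le_cstar chat h (y := z2) hs hb
    have h2 : s * (z1 - z2) ≤ chat * |z1 - z2| := by
      calc s * (z1 - z2) ≤ |s * (z1 - z2)| := le_abs_self _
        _ = s * |z1 - z2| := by rw [abs_mul, abs_of_nonneg hs.1]
        _ ≤ chat * |z1 - z2| := mul_le_mul_of_nonneg_right hs.2 (abs_nonneg _)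
    nlinarith [h1, h2]
  rw [abs_sub_le_iff]
  refine ⟨key y1 y2, ?_⟩
  have := key y2 y1
  rwa [abs_sub_comm] at this

lemma cstar_continuous (chat : ℝ) (hc : 0 ≤ chat) (h : ℝ → ℝ) (b : ℝ)
    (hb : ∀ s ∈ Set.Icc (0:ℝ) chat, b ≤ h s) :
    Continuous (cstar chat h) := by
  have : LipschitzWith ⟨chat, hc⟩ (cstar chat h) := by
    apply LipschitzWith.of_dist_le_mul
    intro x y
    rw [Real.dist_eq, Real.dist_eq]
    exact cstar_lip chat hc h b hb x y
  exact this.continuous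

lemma my_cover (chat : ℝ) (hc : 0 < chat) (m : ℕ) (hm : 2 ≤ m) (node : ℕ → ℝ)
    (hnode : ∀ k : ℕ, node k = ((k : ℝ) - 1) * chat / ((m : ℝ) - 1)) :
    ∃ kk : ℝ → ℕ, Monotone kk ∧ ∀ s ∈ Set.Icc (0:ℝ) chat,
      kk s ∈ Finset.Icc 1 (m-1) ∧ node (kk s) ≤ s ∧ s ≤ node (kk s + 1) := by
  have hm1 : (1:ℝ) ≤ (m:ℝ) - 1 := by
    have : (2:ℝ) ≤ (m:ℝ) := by exact_mod_cast hm
    linarith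
  have hm1pos : (0:ℝ) < (m:ℝ) - 1 := by linarith
  set T : ℝ → ℝ := fun s => s * ((m:ℝ) - 1) / chat with hT
  refine ⟨fun s => min (m-1) ((⌊T s⌋).toNat + 1), ?_, ?_⟩
  · intro s t hst
    have hmono : T s ≤ T t := by
      apply div_le_div_of_nonneg_right ?_ hc.le
      exact mul_le_mul_of_nonneg_right hst (by linarith)
    exact min_le_min le_rfl (Nat.succ_le_succ (Int.toNat_le_toNat (Int.floor_le_floor hmono)))
  · intro s hs
    have ht0 : 0 ≤ T s := by
      apply div_nonneg _ hc.le
      exact mul_nonneg hs.1 (by linarith)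
    have htm : T s ≤ (m:ℝ) - 1 := by
      rw [hT]
      rw [div_le_iff₀ hc]
      calc s * ((m:ℝ)-1) ≤ chat * ((m:ℝ)-1) := mul_le_mul_of_nonneg_right hs.2 (by linarith)
        _ = ((m:ℝ)-1) * chat := by ring
    have hfl0 : (0:ℤ) ≤ ⌊T s⌋ := Int.floor_nonneg.2 ht0
    have hcast : ((⌊T s⌋.toNat : ℝ)) = (⌊T s⌋ : ℝ) := by
      exact_mod_cast Int.toNat_of_nonneg hfl0
    set k := min (m-1) ((⌊T s⌋).toNat + 1) with hk
    have hk1 : 1 ≤ k := le_min (by omega) (Nat.succ_le_succ (Nat.zero_le _))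
    have hkm : k ≤ m - 1 := min_le_left _ _
    have hmcast : ((m - 1 : ℕ) : ℝ) = (m:ℝ) - 1 := by
      have : 1 ≤ m := by omega
      push_cast [this]; ring
    have hseq : s = T s * chat / ((m:ℝ) - 1) := by
      rw [hT]; field_simp
    refine ⟨Finset.mem_Icc.2 ⟨hk1, hkm⟩, ?_, ?_⟩
    · -- node k ≤ s
      have hkle : (k:ℝ) ≤ (⌊T s⌋.toNat : ℝ) + 1 := by
        have : k ≤ ⌊T s⌋.toNat + 1 := min_le_right _ _
        exact_mod_cast this
      have hfle : (⌊T s⌋ : ℝ) ≤ T s := Int.floor_le _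
      rw [hcast] at hkle
      calc node k = ((k:ℝ) - 1) * chat / ((m:ℝ) - 1) := hnode k
        _ ≤ T s * chat / ((m:ℝ) - 1) := by
            apply div_le_div_of_nonneg_right _ hm1pos.le
            apply mul_le_mul_of_nonneg_right _ hc.le
            linarith
        _ = s := hseq.symm
    · -- s ≤ node (k+1)
      have hgoal : T s ≤ (k:ℝ) := by
        by_cases hcase : (⌊T s⌋).toNat + 1 ≤ m - 1
        · have hkeq : k = ⌊T s⌋.toNat + 1 := min_eq_right hcase
          have hlt : T s < (⌊T s⌋ : ℝ) + 1 := Int.lt_floor_add_one _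
          rw [hkeq]
          push_cast [hcast]
          linarith
        · have hkeq : k = m - 1 := min_eq_left (by omega)
          rw [hkeq, hmcast]
          exact htm
      calc s = T s * chat / ((m:ℝ) - 1) := hseq
        _ ≤ (((k:ℕ)+1:ℝ) - 1) * chat / ((m:ℝ) - 1) := by
            apply div_le_div_of_nonneg_right _ hm1pos.le
            apply mul_le_mul_of_nonneg_right _ hc.le
            push_cast
            linarith
        _ = node (k+1) := by rw [hnode (k+1)]; push_cast; ring_nf

lemma my_interp (chat : ℝ) (hc : 0 < chat) (m : ℕ) (hm : 2 ≤ m) (node : ℕ → ℝ)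
    (hnode : ∀ k : ℕ, node k = ((k : ℝ) - 1) * chat / ((m : ℝ) - 1))
    (L : ℝ) (hL : 0 ≤ L) (g : ℝ → ℝ) (hmono : Monotone g)
    (hlip : ∀ x y : ℝ, |g x - g y| ≤ L * |x - y|)
    (p : (ℝ → ℝ) → (ℝ → ℝ))
    (hp : ∀ k ∈ Finset.Icc 1 (m - 1),
      ∀ s ∈ Set.Icc (node k) (node (k + 1)),
        p g s = g (node k)
          + (g (node (k + 1)) - g (node k)) / (node (k + 1) - node k) * (s - node k)) :
    (∀ s ∈ Set.Icc (0:ℝ) chat,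
      g 0 ≤ p g s ∧ p g s ≤ g chat ∧ |p g s - g s| ≤ L * chat / ((m:ℝ) - 1))
    ∧ MonotoneOn (p g) (Set.Icc (0:ℝ) chat) := by
  have hm1 : (1:ℝ) ≤ (m:ℝ) - 1 := by
    have : (2:ℝ) ≤ (m:ℝ) := by exact_mod_cast hm
    linarith
  have hm1pos : (0:ℝ) < (m:ℝ) - 1 := by linarith
  set δ := chat / ((m:ℝ) - 1) with hδ
  have hδpos : 0 < δ := div_pos hc hm1pos
  have hstep : ∀ k : ℕ, node (k+1) - node k = δ := by
    intro k
    rw [hnode, hnode, hδ]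
    push_cast
    field_simp
    ring
  have hnodemono : Monotone node := by
    intro a b hab
    rw [hnode, hnode]
    apply div_le_div_of_nonneg_right _ hm1pos.le
    apply mul_le_mul_of_nonneg_right _ hc.le
    have : (a:ℝ) ≤ (b:ℝ) := by exact_mod_cast hab
    linarith
  have hnode1 : node 1 = 0 := by rw [hnode]; push_cast; ring_nf
  have hnodem : node m = chat := by
    rw [hnode]; field_simp
  obtain ⟨kk, hkkmono, hkk⟩ := my_cover chat hc m hm node hnode
  -- per-point facts
  have key : ∀ s ∈ Set.Icc (0:ℝ) chat,
      g (node (kk s)) ≤ p g s ∧ p g s ≤ g (node (kk s + 1)) ∧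
      |p g s - g s| ≤ L * δ := by
    intro s hs
    obtain ⟨hkmem, hns, hsn⟩ := hkk s hs
    set k := kk s
    have hform := hp k hkmem s ⟨hns, hsn⟩
    have hgd0 : 0 ≤ g (node (k+1)) - g (node k) := by
      have := hmono (hnodemono (Nat.le_succ k))
      linarith
    have hgdL : g (node (k+1)) - g (node k) ≤ L * δ := by
      have := hlip (node (k+1)) (node k)
      rw [abs_of_nonneg hgd0] at this
      rwa [show node (k+1) - node k = δ from hstep k, abs_of_pos hδpos] at this
    set gd := g (node (k+1)) - g (node k) with hgd
    have hsl0 : 0 ≤ gd / δ := div_nonneg hgd0 hδpos.le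
    have hr1 : 0 ≤ s - node k := by linarith
    have hr2 : s - node k ≤ δ := by
      have := hstep k
      linarith
    have hup : gd / δ * (s - node k) ≤ gd := by
      calc gd / δ * (s - node k) ≤ gd / δ * δ := mul_le_mul_of_nonneg_left hr2 hsl0
        _ = gd := by field_simp
    have hlo : 0 ≤ gd / δ * (s - node k) := mul_nonneg hsl0 hr1
    rw [hstep k] at hform
    have hp1 : g (node k) ≤ p g s := by rw [hform]; linarith
    have hp2 : p g s ≤ g (node (k+1)) := by rw [hform]; linarith
    have hg1 : g (node k) ≤ g s := hmono hns
    have hg2 : g s ≤ g (node (k+1)) := hmono hsn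
    refine ⟨hp1, hp2, ?_⟩
    rw [abs_le]
    constructor <;> [linarith; linarith]
  constructor
  · intro s hs
    obtain ⟨hkmem, _, _⟩ := hkk s hs
    obtain ⟨h1, h2, h3⟩ := key s hs
    rw [Finset.mem_Icc] at hkmem
    have hn0 : node 1 ≤ node (kk s) := hnodemono hkmem.1
    have hnc : node (kk s + 1) ≤ node m := hnodemono (by omega)
    refine ⟨?_, ?_, ?_⟩
    · calc g 0 = g (node 1) := by rw [hnode1]
        _ ≤ g (node (kk s)) := hmono hn0
        _ ≤ p g s := h1
    · calc p g s ≤ g (node (kk s + 1)) := h2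
        _ ≤ g (node m) := hmono hnc
        _ = g chat := by rw [hnodem]
    · calc |p g s - g s| ≤ L * δ := h3
        _ = L * chat / ((m:ℝ)-1) := by rw [hδ]; ring
  · intro x hx y hy hxy
    have hab : kk x ≤ kk y := hkkmono hxy
    rcases eq_or_lt_of_le hab with heq | hlt
    · -- same interval
      obtain ⟨hkmemx, hnx, hxn⟩ := hkk x hx
      obtain ⟨hkmemy, hny, hyn⟩ := hkk y hy
      rw [← heq] at hny hyn hkmemy
      have hfx := hp (kk x) hkmemx x ⟨hnx, hxn⟩
      have hfy := hp (kk x) hkmemx y ⟨hny, hyn⟩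
      rw [hfx, hfy]
      have hgd0 : 0 ≤ g (node (kk x + 1)) - g (node (kk x)) := by
        have := hmono (hnodemono (Nat.le_succ (kk x)))
        linarith
      have hd0 : 0 < node (kk x + 1) - node (kk x) := by rw [hstep]; exact hδpos
      have hsl0 : 0 ≤ (g (node (kk x + 1)) - g (node (kk x))) / (node (kk x + 1) - node (kk x)) :=
        div_nonneg hgd0 hd0.le
      nlinarith [mul_le_mul_of_nonneg_left (sub_le_sub_right hxy (node (kk x))) hsl0]
    · -- different intervals
      obtain ⟨_, h2x, _⟩ := key x hx
      obtain ⟨h1y, _, _⟩ := key y hy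
      calc p g x ≤ g (node (kk x + 1)) := h2x
        _ ≤ g (node (kk y)) := hmono (hnodemono hlt)
        _ ≤ p g y := h1y

/-- Approximating the outer problem by piecewise linear interpolation
on the equidistant grid `s_1,…,s_m` of `[0,ĉ]` changes neither `K` nor its infimum over
`Ĝ` by more than `2·φ(1)·ĉ/(m-1)`. -/
theorem outer_problem_approximation {Ω : Type*} [MeasurableSpace Ω] (P : Measure Ω)
    [IsProbabilityMeasure P] (φ : ℝ → ℝ) (hφ : IsSpectrum φ)
    (ρbar chat : ℝ) (hρ : 0 ≤ ρbar) (hc : 0 < chat)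
    (m : ℕ) (hm : 2 ≤ m)
    (node : ℕ → ℝ) (hnode : ∀ k : ℕ, node k = ((k : ℝ) - 1) * chat / ((m : ℝ) - 1))
    (𝒞 : Set (Ω → ℝ)) (h𝒞ne : 𝒞.Nonempty)
    (h𝒞 : ∀ C ∈ 𝒞, Measurable C ∧ (∀ᵐ ω ∂P, C ω ∈ Set.Icc 0 chat))
    (p : (ℝ → ℝ) → (ℝ → ℝ))
    (hp : ∀ g : ℝ → ℝ, ∀ k ∈ Finset.Icc 1 (m - 1),
      ∀ s ∈ Set.Icc (node k) (node (k + 1)),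
        p g s = g (node k)
          + (g (node (k + 1)) - g (node k)) / (node (k + 1) - node k) * (s - node k)) :
    |sInf ((fun g => Kobj P 𝒞 φ chat (p g)) '' GHat (φ 1) ρbar chat)
        - sInf ((fun g => Kobj P 𝒞 φ chat g) '' GHat (φ 1) ρbar chat)|
      ≤ sSup ((fun g => |Kobj P 𝒞 φ chat (p g) - Kobj P 𝒞 φ chat g|) ''
          GHat (φ 1) ρbar chat) ∧
    sSup ((fun g => |Kobj P 𝒞 φ chat (p g) - Kobj P 𝒞 φ chat g|) ''
          GHat (φ 1) ρbar chat)
      ≤ 2 * φ 1 * chat / ((m : ℝ) - 1) := by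
  obtain ⟨hφmono, hφpos, -, -⟩ := hφ
  have hL0 : 0 ≤ φ 1 := hφpos 1 ⟨zero_le_one, le_refl 1⟩
  set L := φ 1 with hLdef
  have hm1 : (1:ℝ) ≤ (m:ℝ) - 1 := by
    have : (2:ℝ) ≤ (m:ℝ) := by exact_mod_cast hm
    linarith
  have hm1pos : (0:ℝ) < (m:ℝ) - 1 := by linarith
  set Ld := L * chat / ((m:ℝ) - 1) with hLd
  have hLd0 : 0 ≤ Ld := div_nonneg (mul_nonneg hL0 hc.le) hm1pos.le
  set B : ℝ := -(L * chat + ρbar) with hB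
  set μ := volume.restrict (Set.Ioo (0:ℝ) 1) with hμ
  have hres_fin : IsFiniteMeasure μ := by
    constructor
    rw [hμ, Measure.restrict_apply_univ, Real.volume_Ioo]
    exact ENNReal.ofReal_lt_top
  have hvol1 : μ Set.univ = 1 := by
    rw [hμ, Measure.restrict_apply_univ, Real.volume_Ioo]
    norm_num
  have hφae : AEMeasurable φ μ :=
    aemeasurable_restrict_of_monotoneOn measurableSet_Ioo (hφmono.mono Set.Ioo_subset_Icc_self)
  have hmemae : ∀ᵐ u ∂μ, u ∈ Set.Ioo (0:ℝ) 1 := ae_restrict_mem measurableSet_Ioo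
  have hφbd : ∀ u ∈ Set.Ioo (0:ℝ) 1, 0 ≤ φ u ∧ φ u ≤ L := fun u hu =>
    ⟨hφpos u ⟨hu.1.le, hu.2.le⟩, hφmono ⟨hu.1.le, hu.2.le⟩ ⟨zero_le_one, le_refl 1⟩ hu.2.le⟩
  have hM0 : 0 ≤ chat * L + (L * chat + ρbar) := by nlinarith
  -- the per-g key estimate
  have key : ∀ g ∈ GHat L ρbar chat,
      |Kobj P 𝒞 φ chat (p g) - Kobj P 𝒞 φ chat g| ≤ 2 * Ld ∧
      B ≤ Kobj P 𝒞 φ chat (p g) ∧ B ≤ Kobj P 𝒞 φ chat g := by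
    intro g hg
    obtain ⟨⟨hmono, hconv, hlip, hbdd⟩, hg0, hgc⟩ := hg
    have hg00 : 0 ≤ g 0 := (hbdd 0).1
    have hg0ρ : g 0 ≤ ρbar := by
      have := (hbdd 0).2
      simpa using this
    have hgcb : g chat ≤ L * chat + ρbar := by
      have := (hbdd chat).2
      rwa [max_eq_left hc.le] at this
    obtain ⟨hpt, hpmono⟩ := my_interp chat hc m hm node hnode L hL0 g hmono hlip p (hp g)
    set cl : ℝ → ℝ := fun s => min (max s 0) chat with hcl
    have hclmem : ∀ s, cl s ∈ Set.Icc (0:ℝ) chat := fun s =>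
      ⟨le_min (le_max_right s 0) hc.le, min_le_right _ _⟩
    have hclmono : Monotone cl := fun a b hab =>
      min_le_min (max_le_max hab le_rfl) le_rfl
    have hcleq : ∀ s ∈ Set.Icc (0:ℝ) chat, cl s = s := fun s hs => by
      rw [hcl]; dsimp only; rw [max_eq_left hs.1, min_eq_left hs.2]
    set q : ℝ → ℝ := fun s => p g (cl s) with hq
    have hqmono : Monotone q := fun a b hab => hpmono (hclmem a) (hclmem b) (hclmono hab)
    have hqmeas : Measurable q := hqmono.measurable
    have hqeq : ∀ s ∈ Set.Icc (0:ℝ) chat, q s = p g s := fun s hs => by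
      rw [hq]; dsimp only; rw [hcleq s hs]
    have hqlb : ∀ s, g 0 ≤ q s := fun s => (hpt (cl s) (hclmem s)).1
    have hqub : ∀ s, q s ≤ g chat := fun s => (hpt (cl s) (hclmem s)).2.1
    have hqg : ∀ s ∈ Set.Icc (0:ℝ) chat, |q s - g s| ≤ Ld := fun s hs => by
      rw [hqeq s hs, hLd]; exact (hpt s hs).2.2
    have hgcont : Continuous g := by
      have : LipschitzWith ⟨L, hL0⟩ g := by
        apply LipschitzWith.of_dist_le_mul
        intro x y
        rw [Real.dist_eq, Real.dist_eq]
        exact hlip x y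
      exact this.continuous
    -- expectation part
    have hint_g : ∀ C ∈ 𝒞, Integrable (fun ω => g (C ω)) P := by
      intro C hC
      obtain ⟨hCm, hCae⟩ := h𝒞 C hC
      apply Integrable.mono' (integrable_const (g chat))
        ((hgcont.measurable.comp hCm).aestronglyMeasurable)
      filter_upwards [hCae] with ω hω
      simp only [Function.comp_apply]
      rw [Real.norm_eq_abs, abs_of_nonneg (hbdd _).1]
      exact hmono hω.2
    have hint_q : ∀ C ∈ 𝒞, Integrable (fun ω => q (C ω)) P := by
      intro C hC
      obtain ⟨hCm, hCae⟩ := h𝒞 C hC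
      apply Integrable.mono' (integrable_const (g chat))
        ((hqmeas.comp hCm).aestronglyMeasurable)
      apply Filter.Eventually.of_forall
      intro ω
      simp only [Function.comp_apply]
      rw [Real.norm_eq_abs, abs_of_nonneg (le_trans hg00 (hqlb _))]
      exact hqub _
    have hEeq : ∀ C ∈ 𝒞, ∫ ω, p g (C ω) ∂P = ∫ ω, q (C ω) ∂P := by
      intro C hC
      obtain ⟨hCm, hCae⟩ := h𝒞 C hC
      apply integral_congr_ae
      filter_upwards [hCae] with ω hω
      exact (hqeq _ hω).symm
    have himg_eq : (fun C : Ω → ℝ => ∫ ω, p g (C ω) ∂P) '' 𝒞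
        = (fun C : Ω → ℝ => ∫ ω, q (C ω) ∂P) '' 𝒞 := Set.image_congr hEeq
    have hEdiff : ∀ C ∈ 𝒞,
        |(fun C : Ω → ℝ => ∫ ω, q (C ω) ∂P) C - (fun C : Ω → ℝ => ∫ ω, g (C ω) ∂P) C| ≤ Ld := by
      intro C hC
      obtain ⟨hCm, hCae⟩ := h𝒞 C hC
      dsimp only
      rw [← integral_sub (hint_q C hC) (hint_g C hC)]
      calc |∫ ω, (q (C ω) - g (C ω)) ∂P| ≤ ∫ ω, |q (C ω) - g (C ω)| ∂P := by
            simpa [Real.norm_eq_abs] using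
              norm_integral_le_integral_norm (μ := P) (fun ω => q (C ω) - g (C ω))
        _ ≤ ∫ _ω, Ld ∂P := by
            apply integral_mono_ae ((hint_q C hC).sub (hint_g C hC)).abs (integrable_const Ld)
            filter_upwards [hCae] with ω hω
            exact hqg _ hω
        _ = Ld := by simp
    have hE0q : ∀ C ∈ 𝒞, (0:ℝ) ≤ ∫ ω, q (C ω) ∂P := fun C _ =>
      integral_nonneg fun ω => le_trans hg00 (hqlb _)
    have hE0g : ∀ C ∈ 𝒞, (0:ℝ) ≤ ∫ ω, g (C ω) ∂P := fun C _ =>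
      integral_nonneg fun ω => (hbdd _).1
    have hbddq : BddBelow ((fun C : Ω → ℝ => ∫ ω, q (C ω) ∂P) '' 𝒞) := by
      refine ⟨0, ?_⟩; rintro z ⟨C, hC, rfl⟩; exact hE0q C hC
    have hbddg : BddBelow ((fun C : Ω → ℝ => ∫ ω, g (C ω) ∂P) '' 𝒞) := by
      refine ⟨0, ?_⟩; rintro z ⟨C, hC, rfl⟩; exact hE0g C hC
    have hIdiff : |sInf ((fun C : Ω → ℝ => ∫ ω, q (C ω) ∂P) '' 𝒞)
        - sInf ((fun C : Ω → ℝ => ∫ ω, g (C ω) ∂P) '' 𝒞)| ≤ Ld :=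
      my_csInf_abs_sub h𝒞ne _ _ Ld hbddq hbddg hEdiff
    have hIlbq : (0:ℝ) ≤ sInf ((fun C : Ω → ℝ => ∫ ω, q (C ω) ∂P) '' 𝒞) := by
      apply le_csInf (h𝒞ne.image _)
      rintro z ⟨C, hC, rfl⟩; exact hE0q C hC
    have hIlbg : (0:ℝ) ≤ sInf ((fun C : Ω → ℝ => ∫ ω, g (C ω) ∂P) '' 𝒞) := by
      apply le_csInf (h𝒞ne.image _)
      rintro z ⟨C, hC, rfl⟩; exact hE0g C hC
    -- cstar part
    have hgicc : ∀ s ∈ Set.Icc (0:ℝ) chat, (0:ℝ) ≤ g s := fun s _ => (hbdd s).1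
    have hqicc : ∀ s ∈ Set.Icc (0:ℝ) chat, (0:ℝ) ≤ q s := fun s _ => le_trans hg00 (hqlb s)
    have hcont_cg : Continuous (cstar chat g) := cstar_continuous chat hc.le g 0 hgicc
    have hcont_cq : Continuous (cstar chat q) := cstar_continuous chat hc.le q 0 hqicc
    have hcstar_eq : cstar chat (p g) = cstar chat q := by
      funext y
      unfold cstar
      congr 1
      apply Set.image_congr
      intro s hs
      rw [hqeq s hs]
    have hbound_g : ∀ y, 0 ≤ y → y ≤ L → |cstar chat g y| ≤ chat * L + (L * chat + ρbar) := by
      intro y hy0 hyL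
      rw [abs_le]
      constructor
      · have h1 : (0:ℝ) * y - g 0 ≤ cstar chat g y :=
          le_cstar chat g ⟨le_refl 0, hc.le⟩ hgicc
        have hcl : 0 ≤ chat * L := mul_nonneg hc.le hL0
        have hlc : 0 ≤ L * chat := mul_nonneg hL0 hc.le
        nlinarith
      · apply cstar_le chat hc.le
        intro s hs
        have h1 : s * y ≤ chat * L := mul_le_mul hs.2 hyL hy0 hc.le
        have h2 := (hbdd s).1
        nlinarith [mul_nonneg hL0 hc.le]
    have hbound_q : ∀ y, 0 ≤ y → y ≤ L → |cstar chat q y| ≤ chat * L + (L * chat + ρbar) := by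
      intro y hy0 hyL
      rw [abs_le]
      constructor
      · have h1 : (0:ℝ) * y - q 0 ≤ cstar chat q y :=
          le_cstar chat q ⟨le_refl 0, hc.le⟩ hqicc
        have h2 : q 0 ≤ g chat := hqub 0
        have hcl : 0 ≤ chat * L := mul_nonneg hc.le hL0
        nlinarith
      · apply cstar_le chat hc.le
        intro s hs
        have h1 : s * y ≤ chat * L := mul_le_mul hs.2 hyL hy0 hc.le
        have h2 := hqicc s hs
        nlinarith [mul_nonneg hL0 hc.le]
    have hintJ_g : Integrable (fun u => cstar chat g (φ u)) μ := by
      apply Integrable.mono' (integrable_const (chat * L + (L * chat + ρbar)))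
        ((hcont_cg.measurable.comp_aemeasurable hφae).aestronglyMeasurable)
      filter_upwards [hmemae] with u hu
      obtain ⟨hy0, hyL⟩ := hφbd u hu
      rw [Real.norm_eq_abs]
      exact hbound_g _ hy0 hyL
    have hintJ_q : Integrable (fun u => cstar chat q (φ u)) μ := by
      apply Integrable.mono' (integrable_const (chat * L + (L * chat + ρbar)))
        ((hcont_cq.measurable.comp_aemeasurable hφae).aestronglyMeasurable)
      filter_upwards [hmemae] with u hu
      obtain ⟨hy0, hyL⟩ := hφbd u hu
      rw [Real.norm_eq_abs]
      exact hbound_q _ hy0 hyL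
    have hJdiff : |(∫ u, cstar chat q (φ u) ∂μ) - ∫ u, cstar chat g (φ u) ∂μ| ≤ Ld := by
      rw [← integral_sub hintJ_q hintJ_g]
      calc |∫ u, (cstar chat q (φ u) - cstar chat g (φ u)) ∂μ|
          ≤ ∫ u, |cstar chat q (φ u) - cstar chat g (φ u)| ∂μ := by
            simpa [Real.norm_eq_abs] using
              norm_integral_le_integral_norm (μ := μ)
                (fun u => cstar chat q (φ u) - cstar chat g (φ u))
        _ ≤ ∫ _u, Ld ∂μ := by
            apply integral_mono_ae (hintJ_q.sub hintJ_g).abs (integrable_const Ld)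
            apply Filter.Eventually.of_forall
            intro u
            exact cstar_abs_sub chat hc.le q g (φ u) Ld 0 0 hqicc hgicc hqg
        _ = Ld := by rw [integral_const, measureReal_def, hvol1]; simp
    have hJlb : ∀ h : ℝ → ℝ, Integrable (fun u => cstar chat h (φ u)) μ →
        (∀ y, 0 ≤ y → y ≤ L → |cstar chat h y| ≤ chat * L + (L * chat + ρbar)) →
        (∀ s ∈ Set.Icc (0:ℝ) chat, (0:ℝ) ≤ h s) → (h 0 ≤ L * chat + ρbar) →
        -(L * chat + ρbar) ≤ ∫ u, cstar chat h (φ u) ∂μ := by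
      intro h hint _ hicc h0b
      have : ∫ _u, -(L * chat + ρbar) ∂μ ≤ ∫ u, cstar chat h (φ u) ∂μ := by
        apply integral_mono_ae (integrable_const _) hint
        apply Filter.Eventually.of_forall
        intro u
        have h1 : (0:ℝ) * φ u - h 0 ≤ cstar chat h (φ u) :=
          le_cstar chat h ⟨le_refl 0, hc.le⟩ hicc
        nlinarith
      calc -(L * chat + ρbar) = ∫ _u, -(L * chat + ρbar) ∂μ := by
            rw [integral_const, measureReal_def, hvol1]; simp
        _ ≤ _ := this
    have hq0b : q 0 ≤ L * chat + ρbar := le_trans (hqub 0) hgcb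
    have hg0b : g 0 ≤ L * chat + ρbar := by nlinarith [mul_nonneg hL0 hc.le]
    have hKpg : Kobj P 𝒞 φ chat (p g)
        = sInf ((fun C : Ω → ℝ => ∫ ω, q (C ω) ∂P) '' 𝒞) + ∫ u, cstar chat q (φ u) ∂μ := by
      unfold Kobj
      rw [himg_eq, hcstar_eq, hμ]
    have hKg : Kobj P 𝒞 φ chat g
        = sInf ((fun C : Ω → ℝ => ∫ ω, g (C ω) ∂P) '' 𝒞) + ∫ u, cstar chat g (φ u) ∂μ := by
      unfold Kobj
      rw [hμ]
    refine ⟨?_, ?_, ?_⟩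
    · rw [hKpg, hKg]
      have habs := abs_add_le
        (sInf ((fun C : Ω → ℝ => ∫ ω, q (C ω) ∂P) '' 𝒞)
          - sInf ((fun C : Ω → ℝ => ∫ ω, g (C ω) ∂P) '' 𝒞))
        ((∫ u, cstar chat q (φ u) ∂μ) - ∫ u, cstar chat g (φ u) ∂μ)
      have heq : sInf ((fun C : Ω → ℝ => ∫ ω, q (C ω) ∂P) '' 𝒞) + (∫ u, cstar chat q (φ u) ∂μ)
          - (sInf ((fun C : Ω → ℝ => ∫ ω, g (C ω) ∂P) '' 𝒞) + ∫ u, cstar chat g (φ u) ∂μ)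
          = (sInf ((fun C : Ω → ℝ => ∫ ω, q (C ω) ∂P) '' 𝒞)
              - sInf ((fun C : Ω → ℝ => ∫ ω, g (C ω) ∂P) '' 𝒞))
            + ((∫ u, cstar chat q (φ u) ∂μ) - ∫ u, cstar chat g (φ u) ∂μ) := by ring
      rw [heq]
      calc _ ≤ _ := habs
        _ ≤ Ld + Ld := add_le_add hIdiff hJdiff
        _ = 2 * Ld := by ring
    · rw [hKpg, hB]
      have := hJlb q hintJ_q hbound_q hqicc hq0b
      linarith
    · rw [hKg, hB]
      have := hJlb g hintJ_g hbound_g hgicc hg0b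
      linarith
  -- nonemptiness of GHat
  have hGne : (GHat L ρbar chat).Nonempty := by
    refine ⟨fun x => L * max x 0, ⟨⟨?_, ?_, ?_, ?_⟩, ?_, ?_⟩⟩
    · intro a b hab
      exact mul_le_mul_of_nonneg_left (max_le_max hab le_rfl) hL0
    · have h1 : ConvexOn ℝ Set.univ (fun x : ℝ => max x 0) :=
        (convexOn_id convex_univ).sup (convexOn_const 0 convex_univ)
      have h2 := h1.smul hL0
      simpa only [smul_eq_mul] using h2
    · intro x y
      rw [← mul_sub, abs_mul, abs_of_nonneg hL0]
      exact mul_le_mul_of_nonneg_left (abs_max_sub_max_le_abs x y 0) hL0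
    · intro x
      refine ⟨mul_nonneg hL0 (le_max_right x 0), ?_⟩
      show L * max x 0 ≤ L * max x 0 + ρbar
      linarith
    · intro s hs
      show L * max s 0 = L * max 0 0
      rw [max_eq_right hs.le]
      simp
    · intro s hs
      show L * max s 0 = L * max chat 0 + L * (s - chat)
      rw [max_eq_left (le_of_lt (lt_trans hc hs)), max_eq_left hc.le]
      ring
  have hSbdd : BddAbove ((fun g => |Kobj P 𝒞 φ chat (p g) - Kobj P 𝒞 φ chat g|) ''
      GHat L ρbar chat) := by
    refine ⟨2 * Ld, ?_⟩
    rintro z ⟨g, hg, rfl⟩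
    exact (key g hg).1
  have hSle : sSup ((fun g => |Kobj P 𝒞 φ chat (p g) - Kobj P 𝒞 φ chat g|) ''
      GHat L ρbar chat) ≤ 2 * Ld := by
    apply csSup_le (hGne.image _)
    rintro z ⟨g, hg, rfl⟩
    exact (key g hg).1
  constructor
  · apply my_csInf_abs_sub hGne _ _ _ ?_ ?_ ?_
    · refine ⟨B, ?_⟩
      rintro z ⟨g, hg, rfl⟩
      exact (key g hg).2.1
    · refine ⟨B, ?_⟩
      rintro z ⟨g, hg, rfl⟩
      exact (key g hg).2.2
    · intro g hg
      exact le_csSup hSbdd ⟨g, hg, rfl⟩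
  · calc sSup ((fun g => |Kobj P 𝒞 φ chat (p g) - Kobj P 𝒞 φ chat g|) ''
        GHat L ρbar chat) ≤ 2 * Ld := hSle
      _ = 2 * L * chat / ((m:ℝ) - 1) := by rw [hLd]; ring
end

section
/- Let (Ω,𝒜,P) be a probability space, Y a nonnegative integrable random variable, and π a functional from the set of nonnegative integrable random variables to (−∞,∞] with the Fatou property: whenever X_k→X almost surely with 0≤X_k≤W for all k for some integrable W, then π(X) ≤ liminf_{k→∞} π(X_k). Then the map ℱ→(−∞,∞], f ↦ π(Y − f(Y)), is lower semicontinuous with respect to the topology of uniform convergence on compact sets on ℱ. -/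
open MeasureTheory Set NNReal Filter Topology

/-- The set `ℱ` of retained loss functions inside `C([0,∞),ℝ)` with the topology of
uniform convergence on compact sets. -/
def FSet : Set C(ℝ≥0, ℝ) :=
  {f | (∀ t : ℝ≥0, 0 ≤ f t ∧ f t ≤ (t : ℝ)) ∧ Monotone (f : ℝ≥0 → ℝ) ∧
    Monotone (fun t : ℝ≥0 => (t : ℝ) - f t)}

/-! The topology of `ℱ` is first countable, so lower semicontinuity may be tested along
sequences `f_k → f`. Such a sequence converges pointwise, hence `Y - f_k(Y) → Y - f(Y)` surely,
and `0 ≤ Y - f_k(Y) ≤ Y` with `Y` integrable, so the Fatou property applies. -/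

theorem lowerSemicontinuous_of_le_liminf_seq {α γ : Type*} [TopologicalSpace α]
    [SequentialSpace α] [CompleteLinearOrder γ] {f : α → γ}
    (h : ∀ (u : ℕ → α) (x : α), Tendsto u atTop (𝓝 x) → f x ≤ liminf (f ∘ u) atTop) :
    LowerSemicontinuous f := by
  refine lowerSemicontinuous_iff_isClosed_preimage.2 fun y => IsSeqClosed.isClosed ?_
  intro u x hu hux
  exact (h u x hux).trans (liminf_le_of_frequently_le' (Frequently.of_forall hu))

theorem FSet.sub_apply_mem_Icc {f : C(ℝ≥0, ℝ)} (hf : f ∈ FSet) (t : ℝ≥0) :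
    (t : ℝ) - f t ∈ Icc 0 (t : ℝ) := by
  obtain ⟨hf0, hft⟩ := hf.1 t
  constructor <;> linarith

theorem reinsurance_premium_lsc_general {Ω : Type*} [MeasurableSpace Ω] (P : Measure Ω)
    (Y : Ω → ℝ≥0)
    (hYi : Integrable (fun ω => (Y ω : ℝ)) P)
    (π : (Ω → ℝ) → EReal)
    (hfatou : ∀ (X : Ω → ℝ) (Xk : ℕ → Ω → ℝ) (W : Ω → ℝ), Integrable W P →
      (∀ k, ∀ᵐ ω ∂P, 0 ≤ Xk k ω ∧ Xk k ω ≤ W ω) →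
      (∀ᵐ ω ∂P, Tendsto (fun k => Xk k ω) atTop (𝓝 (X ω))) →
      π X ≤ liminf (fun k => π (Xk k)) atTop) :
    LowerSemicontinuous
      (fun f : FSet => π (fun ω => (Y ω : ℝ) - (f : C(ℝ≥0, ℝ)) (Y ω))) := by
  refine lowerSemicontinuous_of_le_liminf_seq fun u f hu => hfatou _ _ _ hYi ?_ ?_
  · exact fun k => ae_of_all P fun ω => FSet.sub_apply_mem_Icc (u k).2 (Y ω)
  · have hu' : Tendsto (fun k => (u k : C(ℝ≥0, ℝ))) atTop (𝓝 f) :=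
      (continuous_subtype_val.tendsto f).comp hu
    exact ae_of_all P fun ω =>
      tendsto_const_nhds.sub (((continuous_eval_const (Y ω)).tendsto _).comp hu')

/-- Let `Y` be a nonnegative integrable random variable and `π` a
functional on nonnegative integrable random variables with the Fatou property
(lower semicontinuity along dominated a.s.-convergent sequences). Then
`f ↦ π(Y - f(Y))` is lower semicontinuous on `ℱ` with respect to the topology of
uniform convergence on compact sets. -/
theorem reinsurance_premium_lsc {Ω : Type*} [MeasurableSpace Ω] (P : Measure Ω)
    [IsProbabilityMeasure P] (Y : Ω → ℝ≥0) (hYm : Measurable Y)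
    (hYi : Integrable (fun ω => (Y ω : ℝ)) P)
    (π : (Ω → ℝ) → EReal)
    (hfatou : ∀ (X : Ω → ℝ) (Xk : ℕ → Ω → ℝ) (W : Ω → ℝ), Integrable W P →
      (∀ k, ∀ᵐ ω ∂P, 0 ≤ Xk k ω ∧ Xk k ω ≤ W ω) →
      (∀ᵐ ω ∂P, Tendsto (fun k => Xk k ω) atTop (𝓝 (X ω))) →
      π X ≤ liminf (fun k => π (Xk k)) atTop) :
    LowerSemicontinuous
      (fun f : FSet => π (fun ω => (Y ω : ℝ) - (f : C(ℝ≥0, ℝ)) (Y ω))) :=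
  reinsurance_premium_lsc_general P Y hYi π hfatou
end

section
/- Let Y be a nonnegative integrable random variable, f∈ℱ, and a∈[0,∞] such that E[min(Y,a)] = E[f(Y)] (with the convention min(Y,∞)=Y). Then min(Y,a) precedes f(Y) in convex order: for every convex function u:ℝ→ℝ for which the expectations E[u(min(Y,a))] and E[u(f(Y))] are well-defined in ℝ∪{+∞}, one has E[u(min(Y,a))] ≤ E[u(f(Y))]. -/
open MeasureTheory Set ENNReal

/-- The expectation of a real random variable as an element of `(-∞,∞]`, well-defined
whenever the negative part is integrable: `E[g] = ∫ g⁺ dP - ∫ g⁻ dP`. -/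
noncomputable def eexp {Ω : Type*} [MeasurableSpace Ω] (P : Measure Ω)
    (g : Ω → ℝ) : EReal :=
  ((∫⁻ ω, ENNReal.ofReal (g ω) ∂P : ℝ≥0∞) : EReal)
    - ((∫ ω, max (-(g ω)) 0 ∂P : ℝ) : EReal)

lemma ofReal_max_zero' (x : ℝ) : ENNReal.ofReal (max x 0) = ENNReal.ofReal x := by
  rcases le_total x 0 with h | h
  · simp [max_eq_right h, ENNReal.ofReal_of_nonpos h]
  · simp [max_eq_left h]


lemma eexp_of_integrable {Ω : Type*} [MeasurableSpace Ω] (P : Measure Ω) (g : Ω → ℝ)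
    (hg : Integrable g P) : eexp P g = ((∫ ω, g ω ∂P : ℝ) : EReal) := by
  have hpos : Integrable (fun ω => max (g ω) 0) P := hg.pos_part
  have hneg : Integrable (fun ω => max (-(g ω)) 0) P := by
    simpa using hg.neg.pos_part
  have h1 : (∫⁻ ω, ENNReal.ofReal (g ω) ∂P) = ENNReal.ofReal (∫ ω, max (g ω) 0 ∂P) := by
    rw [ofReal_integral_eq_lintegral_ofReal hpos
      (Filter.Eventually.of_forall fun ω => le_max_right _ _)]
    simp_rw [ofReal_max_zero']
  have hA : 0 ≤ ∫ ω, max (g ω) 0 ∂P := integral_nonneg fun ω => le_max_right _ _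
  rw [eexp, h1, EReal.coe_ennreal_ofReal, max_eq_left hA, ← EReal.coe_sub]
  norm_cast
  rw [← integral_sub hpos hneg]
  congr 1
  funext ω
  exact max_zero_sub_max_neg_zero_eq_self (g ω)

lemma eexp_eq_top {Ω : Type*} [MeasurableSpace Ω] (P : Measure Ω) (g : Ω → ℝ)
    (h : (∫⁻ ω, ENNReal.ofReal (g ω) ∂P) = ⊤) : eexp P g = ⊤ := by
  rw [eexp, h]
  exact EReal.top_sub_coe _

lemma eexp_mono {Ω : Type*} [MeasurableSpace Ω] (P : Measure Ω)
    (g h d : Ω → ℝ) (hgm : AEStronglyMeasurable g P) (hhm : AEStronglyMeasurable h P)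
    (hd : Integrable d P) (hd0 : ∫ ω, d ω ∂P = 0)
    (hle : ∀ᵐ ω ∂P, g ω ≤ h ω + d ω)
    (hgneg : Integrable (fun ω => max (-(g ω)) 0) P)
    (hhneg : Integrable (fun ω => max (-(h ω)) 0) P) :
    eexp P g ≤ eexp P h := by
  by_cases Hh : (∫⁻ ω, ENNReal.ofReal (h ω) ∂P) = ⊤
  · rw [eexp_eq_top P h Hh]; exact le_top
  · have hhpos : Integrable (fun ω => max (h ω) 0) P := by
      refine ⟨(hhm.sup aestronglyMeasurable_const), ?_⟩
      rw [hasFiniteIntegral_iff_ofReal (f := fun ω => max (h ω) 0)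
        (Filter.Eventually.of_forall fun ω => le_max_right _ _)]
      simp_rw [ofReal_max_zero']
      exact Ne.lt_top Hh
    have hhi : Integrable h P :=
      (hhpos.sub hhneg).congr (Filter.Eventually.of_forall fun ω =>
        max_zero_sub_max_neg_zero_eq_self (h ω))
    have hhd : Integrable (fun ω => h ω + d ω) P := hhi.add hd
    have hgpos : Integrable (fun ω => max (g ω) 0) P := by
      refine hhd.mono (hgm.sup aestronglyMeasurable_const) ?_
      filter_upwards [hle] with ω hω
      rw [Real.norm_eq_abs, Real.norm_eq_abs, abs_of_nonneg (le_max_right _ _)]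
      exact max_le (hω.trans (le_abs_self _)) (abs_nonneg _)
    have hgi : Integrable g P :=
      (hgpos.sub hgneg).congr (Filter.Eventually.of_forall fun ω =>
        max_zero_sub_max_neg_zero_eq_self (g ω))
    rw [eexp_of_integrable P g hgi, eexp_of_integrable P h hhi]
    have hle2 : ∫ ω, g ω ∂P ≤ ∫ ω, h ω ∂P := by
      calc ∫ ω, g ω ∂P ≤ ∫ ω, (h ω + d ω) ∂P := integral_mono_ae hgi hhd hle
        _ = (∫ ω, h ω ∂P) + ∫ ω, d ω ∂P := integral_add hhi hd
        _ = ∫ ω, h ω ∂P := by rw [hd0, add_zero]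
    exact_mod_cast hle2

lemma exists_subgradient' (u : ℝ → ℝ) (hu : ConvexOn ℝ univ u) (k : ℝ) :
    ∃ s : ℝ, ∀ x : ℝ, u k + s * (x - k) ≤ u x := by
  set S : Set ℝ := (fun z => (u z - u k) / (z - k)) '' Ioi k with hS
  have hne : S.Nonempty := ⟨_, ⟨k + 1, by simp, rfl⟩⟩
  have hlb : ∀ x, x < k → ∀ r ∈ S, (u k - u x) / (k - x) ≤ r := by
    rintro x hx r ⟨z, hz, rfl⟩
    exact hu.slope_mono_adjacent (mem_univ x) (mem_univ z) hx hz
  have hbdd : BddBelow S := ⟨(u k - u (k - 1)) / (k - (k - 1)),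
    fun r hr => hlb (k - 1) (by linarith) r hr⟩
  refine ⟨sInf S, fun x => ?_⟩
  rcases lt_trichotomy x k with hx | hx | hx
  · have h1 : (u k - u x) / (k - x) ≤ sInf S := le_csInf hne (hlb x hx)
    have h2 : (0:ℝ) < k - x := by linarith
    have h3 : u k - u x ≤ sInf S * (k - x) := (div_le_iff₀ h2).mp h1
    have h4 : sInf S * (x - k) = -(sInf S * (k - x)) := by ring
    linarith
  · simp [hx]
  · have h1 : sInf S ≤ (u x - u k) / (x - k) := csInf_le hbdd ⟨x, hx, rfl⟩
    have h2 : (0:ℝ) < x - k := by linarith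
    have h3 : sInf S * (x - k) ≤ u x - u k := (le_div_iff₀ h2).mp h1
    linarith

/-- Let `Y ≥ 0` be integrable, `f ∈ ℱ`, and `a ∈ [0,∞]` with
`E[min(Y,a)] = E[f(Y)]` (`min(Y,∞) = Y`). Then `min(Y,a)` precedes `f(Y)` in convex
order: `E[u(min(Y,a))] ≤ E[u(f(Y))]` for every convex `u : ℝ → ℝ` for which both
expectations are well-defined in `ℝ ∪ {+∞}` (i.e. the negative parts are integrable). -/
theorem stop_loss_convex_order {Ω : Type*} [MeasurableSpace Ω] (P : Measure Ω)
    [IsProbabilityMeasure P] (Y : Ω → ℝ) (hYm : Measurable Y)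
    (hY0 : ∀ ω, 0 ≤ Y ω) (hYi : Integrable Y P)
    (f : ℝ → ℝ) (hf1 : ∀ t : ℝ, 0 ≤ t → 0 ≤ f t ∧ f t ≤ t)
    (hf2 : MonotoneOn f (Set.Ici 0))
    (hf3 : MonotoneOn (fun t => t - f t) (Set.Ici 0))
    (a : ℝ≥0∞) (SL : Ω → ℝ)
    (hSL : SL = fun ω => if a = ⊤ then Y ω else min (Y ω) a.toReal)
    (heq : ∫ ω, SL ω ∂P = ∫ ω, f (Y ω) ∂P) :
    ∀ u : ℝ → ℝ, ConvexOn ℝ Set.univ u →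
      Integrable (fun ω => max (-(u (SL ω))) 0) P →
      Integrable (fun ω => max (-(u (f (Y ω)))) 0) P →
      eexp P (fun ω => u (SL ω)) ≤ eexp P (fun ω => u (f (Y ω))) := by
  intro u hu hneg1 hneg2
  have hucont : Continuous u := by
    have := hu.continuousOn isOpen_univ
    rwa [← continuousOn_univ]
  have hfY0 : ∀ ω, 0 ≤ f (Y ω) := fun ω => (hf1 _ (hY0 ω)).1
  have hfYle : ∀ ω, f (Y ω) ≤ Y ω := fun ω => (hf1 _ (hY0 ω)).2
  have hfYm : Measurable (fun ω => f (Y ω)) := by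
    have hf'mono : Monotone (fun t => f (max t 0)) := fun s t hst =>
      hf2 (le_max_right s 0) (le_max_right t 0) (max_le_max hst le_rfl)
    have h1 : Measurable (fun ω => f (max (Y ω) 0)) := hf'mono.measurable.comp hYm
    have h2 : (fun ω => f (max (Y ω) 0)) = fun ω => f (Y ω) :=
      funext fun ω => by rw [max_eq_left (hY0 ω)]
    rwa [h2] at h1
  have hfYi : Integrable (fun ω => f (Y ω)) P :=
    hYi.mono hfYm.aestronglyMeasurable (Filter.Eventually.of_forall fun ω => by
      rw [Real.norm_eq_abs, Real.norm_eq_abs, abs_of_nonneg (hfY0 ω), abs_of_nonneg (hY0 ω)]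
      exact hfYle ω)
  by_cases ha : a = ⊤
  · have hSL' : SL = Y := by rw [hSL]; funext ω; simp [ha]
    rw [hSL'] at heq hneg1 ⊢
    have hdI : Integrable (fun ω => Y ω - f (Y ω)) P := hYi.sub hfYi
    have hd0 : ∫ ω, (Y ω - f (Y ω)) ∂P = 0 := by
      rw [integral_sub hYi hfYi, heq, sub_self]
    have hae : (fun ω => Y ω - f (Y ω)) =ᵐ[P] 0 :=
      (integral_eq_zero_iff_of_nonneg (fun ω => sub_nonneg.2 (hfYle ω)) hdI).mp hd0
    refine eexp_mono P _ _ (fun _ => (0:ℝ))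
      ((hucont.measurable.comp hYm).aestronglyMeasurable)
      ((hucont.measurable.comp hfYm).aestronglyMeasurable)
      (integrable_zero _ _ _) (by simp) ?_ hneg1 hneg2
    filter_upwards [hae] with ω hω
    have hy : Y ω = f (Y ω) := by
      have : Y ω - f (Y ω) = 0 := hω
      linarith
    conv_lhs => rw [hy]
    rw [add_zero]
  · have hSL' : SL = fun ω => min (Y ω) a.toReal := by rw [hSL]; funext ω; simp [ha]
    rw [hSL'] at heq hneg1 ⊢
    set k := a.toReal with hk
    have hk0 : 0 ≤ k := ENNReal.toReal_nonneg
    obtain ⟨s, hs⟩ := exists_subgradient' u hu k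
    have hSLm : Measurable (fun ω => min (Y ω) k) := hYm.min measurable_const
    have hSLi : Integrable (fun ω => min (Y ω) k) P :=
      hYi.mono hSLm.aestronglyMeasurable (Filter.Eventually.of_forall fun ω => by
        rw [Real.norm_eq_abs, Real.norm_eq_abs, abs_of_nonneg (le_min (hY0 ω) hk0),
          abs_of_nonneg (hY0 ω)]
        exact min_le_left _ _)
    have hdi : Integrable (fun ω => s * (min (Y ω) k - f (Y ω))) P :=
      (hSLi.sub hfYi).const_mul s
    have hd0 : ∫ ω, s * (min (Y ω) k - f (Y ω)) ∂P = 0 := by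
      rw [integral_const_mul, integral_sub hSLi hfYi, heq, sub_self, mul_zero]
    have hle : ∀ ω, u (min (Y ω) k) ≤ u (f (Y ω)) + s * (min (Y ω) k - f (Y ω)) := by
      intro ω
      set y := Y ω with hy
      set b := f (Y ω) with hb
      have hb0 : 0 ≤ b := hfY0 ω
      have hby : b ≤ y := hfYle ω
      rcases le_or_gt k y with hky | hyk
      · rw [min_eq_right hky]
        have h1 := hs b
        have h2 : s * (k - b) = -(s * (b - k)) := by ring
        linarith
      · rw [min_eq_left hyk.le]
        rcases eq_or_lt_of_le hby with hbe | hblt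
        · rw [← hbe]; simp
        · have hbk : b < k := lt_trans hblt hyk
          set θ := (k - y) / (k - b) with hθdef
          have hkb : 0 < k - b := by linarith
          have hθ0 : 0 ≤ θ := div_nonneg (by linarith) hkb.le
          have hθ1 : θ ≤ 1 := (div_le_one hkb).2 (by linarith)
          have hθkb : θ * (k - b) = k - y := div_mul_cancel₀ _ hkb.ne'
          have hyc : θ * b + (1 - θ) * k = y := by
            have e : θ * b + (1 - θ) * k = k - θ * (k - b) := by ring
            rw [e, hθkb]; ring
          have hconv := hu.2 (mem_univ b) (mem_univ k) hθ0
            (by linarith : (0:ℝ) ≤ 1 - θ) (by ring : θ + (1 - θ) = 1)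
          simp only [smul_eq_mul] at hconv
          rw [hyc] at hconv
          have hsubk : u k ≤ u b + s * (k - b) := by
            have h1 := hs b
            have h2 : s * (k - b) = -(s * (b - k)) := by ring
            linarith
          have h4 : (1 - θ) * u k ≤ (1 - θ) * (u b + s * (k - b)) :=
            mul_le_mul_of_nonneg_left hsubk (by linarith)
          have e2 : (1 - θ) * (k - b) = y - b := by
            have e : (1 - θ) * (k - b) = (k - b) - θ * (k - b) := by ring
            rw [e, hθkb]; ring
          calc u y ≤ θ * u b + (1 - θ) * u k := hconv
            _ ≤ θ * u b + (1 - θ) * (u b + s * (k - b)) := by linarith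
            _ = u b + s * ((1 - θ) * (k - b)) := by ring
            _ = u b + s * (y - b) := by rw [e2]
    exact eexp_mono P _ _ _ ((hucont.measurable.comp hSLm).aestronglyMeasurable)
      ((hucont.measurable.comp hfYm).aestronglyMeasurable) hdi hd0
      (Filter.Eventually.of_forall hle) hneg1 hneg2
end
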